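/- arXiv:math/0410048 — 9 statements merged into one kernel-verified Lean document; each statement's English description precedes it below -/
import Mathlib

section
/- If f : X → Y is a map between metric spaces such that there exist constants a, b, p > 0 with a·d(x,x')^p ≤ d(f(x), f(x')) ≤ b·d(x,x')^p for all x, x' ∈ X, then the Nagata dimension of X is at most the Nagata dimension of Y. -/
open Metric Set

/-- `X` has Nagata dimension at most `n` (witnessed by some constant `c > 0`):
for every `s > 0` there is a covering by sets of diameter `≤ c * s` such that every
set of diameter `≤ s` meets at most `n + 1` members of the covering. -/
def NagataProp (X : Type*) [MetricSpace X] (n : ℕ) : Prop :=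
  ∃ c : ℝ, 0 < c ∧ ∀ s : ℝ, 0 < s → ∃ 𝓑 : Set (Set X),
    (⋃₀ 𝓑 = univ) ∧
    (∀ B ∈ 𝓑, EMetric.diam B ≤ ENNReal.ofReal (c * s)) ∧
    (∀ E : Set X, EMetric.diam E ≤ ENNReal.ofReal s →
      ∃ T : Finset (Set X), T.card ≤ n + 1 ∧
        ∀ B ∈ 𝓑, (B ∩ E).Nonempty → B ∈ T)

/-- The Nagata (Assouad–Nagata) dimension of a metric space, as an element of `ℕ∞`. -/
noncomputable def nagataDim (X : Type*) [MetricSpace X] : ℕ∞ :=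
  sInf {k : ℕ∞ | ∃ n : ℕ, k = n ∧ NagataProp X n}

private lemma rpow_key {d s K p : ℝ} (hd : 0 ≤ d) (hs : 0 ≤ s) (hK : 0 ≤ K) (hp : 0 < p)
    (h : d ^ p ≤ K * s ^ p) : d ≤ K ^ (1/p) * s := by
  have h1 : (d ^ p) ^ (1/p) ≤ (K * s ^ p) ^ (1/p) :=
    Real.rpow_le_rpow (Real.rpow_nonneg hd p) h (by positivity)
  have h2 : (d ^ p) ^ (1/p) = d := by
    rw [← Real.rpow_mul hd, mul_one_div, div_self hp.ne', Real.rpow_one]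
  have h3 : (K * s ^ p) ^ (1/p) = K ^ (1/p) * s := by
    rw [Real.mul_rpow hK (Real.rpow_nonneg hs p), ← Real.rpow_mul hs,
      mul_one_div, div_self hp.ne', Real.rpow_one]
  rw [h2, h3] at h1
  exact h1

theorem nagataDim_le_of_snowflake_equiv {X Y : Type*} [MetricSpace X] [MetricSpace Y]
    (f : X → Y) (a b p : ℝ) (ha : 0 < a) (hb : 0 < b) (hp : 0 < p)
    (hf : ∀ x x' : X, a * dist x x' ^ p ≤ dist (f x) (f x') ∧
      dist (f x) (f x') ≤ b * dist x x' ^ p) :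
    nagataDim X ≤ nagataDim Y := by
  classical
  apply sInf_le_sInf
  rintro k ⟨n, rfl, c, hc, hY⟩
  refine ⟨n, rfl, (c * b / a) ^ (1/p), by positivity, ?_⟩
  intro s hs
  obtain ⟨𝓑, hcov, hdiam, hmul⟩ := hY (b * s ^ p) (by positivity)
  refine ⟨(fun B => f ⁻¹' B) '' 𝓑, ?_, ?_, ?_⟩
  · ext x
    simp only [mem_sUnion, mem_image, mem_univ, iff_true]
    have : f x ∈ ⋃₀ 𝓑 := hcov ▸ mem_univ _
    obtain ⟨B, hB, hxB⟩ := this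
    exact ⟨f ⁻¹' B, ⟨B, hB, rfl⟩, hxB⟩
  · rintro _ ⟨B, hB, rfl⟩
    apply EMetric.diam_le
    intro x hx y hy
    rw [edist_dist]
    apply ENNReal.ofReal_le_ofReal
    have hfd : dist (f x) (f y) ≤ c * (b * s ^ p) := by
      have h1 := (EMetric.edist_le_diam_of_mem (s := B) hx hy).trans (hdiam B hB)
      rw [edist_dist] at h1
      exact (ENNReal.ofReal_le_ofReal_iff (by positivity)).mp h1
    have h2 : a * dist x y ^ p ≤ c * (b * s ^ p) := (hf x y).1.trans hfd
    have h3 : dist x y ^ p ≤ (c * b / a) * s ^ p := by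
      rw [div_mul_eq_mul_div, le_div_iff₀ ha, mul_comm _ a]
      linarith [h2]
    exact rpow_key dist_nonneg hs.le (by positivity) hp h3
  · intro E hE
    have hEs : ∀ x ∈ E, ∀ y ∈ E, dist x y ≤ s := by
      intro x hx y hy
      have h1 := (EMetric.edist_le_diam_of_mem hx hy).trans hE
      rw [edist_dist] at h1
      exact (ENNReal.ofReal_le_ofReal_iff hs.le).mp h1
    have hfE : EMetric.diam (f '' E) ≤ ENNReal.ofReal (b * s ^ p) := by
      apply EMetric.diam_le
      rintro _ ⟨x, hx, rfl⟩ _ ⟨y, hy, rfl⟩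
      rw [edist_dist]
      apply ENNReal.ofReal_le_ofReal
      have := (hf x y).2
      have hmono : dist x y ^ p ≤ s ^ p :=
        Real.rpow_le_rpow dist_nonneg (hEs x hx y hy) hp.le
      nlinarith
    obtain ⟨T, hT, hTmem⟩ := hmul (f '' E) hfE
    refine ⟨T.image (fun B => f ⁻¹' B), (Finset.card_image_le).trans hT, ?_⟩
    rintro _ ⟨B, hB, rfl⟩ ⟨x, hxB, hxE⟩
    exact Finset.mem_image_of_mem _ (hTmem B hB ⟨f x, hxB, ⟨x, hxE, rfl⟩⟩)
end

section
/- Let X be a metric space, n ≥ 0 an integer, and s > 0. Suppose that for every x ∈ X the closed ball B(x, 3s) can be covered by n+1 sets of diameter ≤ s. Then X admits a covering 𝓑 by closed balls of radius s such that 𝓑 decomposes as a union of n+1 subfamilies 𝓑₀, …, 𝓑ₙ, where for each k any two distinct balls of 𝓑ₖ are at distance > s from each other (equivalently, 𝓑ₖ has s-multiplicity at most 1); in particular every subset of X of diameter ≤ s meets at most n+1 members of 𝓑. -/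
open Metric Set

theorem greedy_coloring {α : Type*} (n : ℕ) (G : α → α → Prop) (hsym : Symmetric G)
    (hirr : ∀ a, ¬ G a a)
    (hfin : ∀ a, ∃ F : Finset α, F.card ≤ n ∧ ∀ b, G a b → b ∈ F) :
    ∃ c : α → Fin (n + 1), ∀ a b, G a b → c a ≠ c b := by
  classical
  choose F hFcard hFmem using hfin
  letI : IsWellOrder α WellOrderingRel := WellOrderingRel.isWellOrder
  have wf : WellFounded (WellOrderingRel : α → α → Prop) := IsWellFounded.wf
  set used : ∀ a : α, (∀ b, WellOrderingRel b a → Fin (n + 1)) → Finset (Fin (n + 1)) :=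
    fun a ih => ((F a).filter (fun b => WellOrderingRel b a)).attach.image
      (fun b => ih b.1 (by have := b.2; rw [Finset.mem_filter] at this; exact this.2)) with hused
  have hne : ∀ a ih, ∃ col : Fin (n + 1), col ∉ used a ih := by
    intro a ih
    by_contra h
    push_neg at h
    have h1 : (Finset.univ : Finset (Fin (n + 1))) ⊆ used a ih := fun x _ => h x
    have h2 := Finset.card_le_card h1
    have h3 : (used a ih).card ≤ (F a).card := by
      refine Finset.card_image_le.trans ?_
      rw [Finset.card_attach]
      exact Finset.card_filter_le _ _
    have h4 := hFcard a
    simp [Finset.card_univ] at h2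
    omega
  set c : α → Fin (n + 1) := wf.fix (fun a ih => (hne a ih).choose) with hcdef
  have hc : ∀ a, c a = (hne a (fun b _ => c b)).choose :=
    fun a => wf.fix_eq _ a
  have key : ∀ a b, G a b → WellOrderingRel b a → c b ≠ c a := by
    intro a b hG hr heq
    have h1 : c a ∉ used a (fun b _ => c b) := by
      rw [hc a]; exact (hne a (fun b _ => c b)).choose_spec
    apply h1
    have hb : b ∈ (F a).filter (fun b => WellOrderingRel b a) :=
      Finset.mem_filter.mpr ⟨hFmem a b hG, hr⟩
    simp only [hused]
    exact heq ▸ Finset.mem_image.mpr ⟨⟨b, hb⟩, Finset.mem_attach _ _, rfl⟩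
  refine ⟨c, fun a b hG => ?_⟩
  rcases trichotomous_of WellOrderingRel a b with h | h | h
  · exact key b a (hsym hG) h
  · exact absurd (h ▸ hG) (hirr b)
  · exact (key a b hG h).symm

theorem covering_by_balls_of_doubling {X : Type*} [MetricSpace X] (n : ℕ) (s : ℝ) (hs : 0 < s)
    (hdb : ∀ x : X, ∃ F : Finset (Set X), F.card ≤ n + 1 ∧
      closedBall x (3 * s) ⊆ ⋃₀ ↑F ∧ ∀ B ∈ F, EMetric.diam B ≤ ENNReal.ofReal s) :
    ∃ 𝓑 : Fin (n + 1) → Set (Set X),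
      (⋃₀ (⋃ k, 𝓑 k) = univ) ∧
      (∀ k, ∀ B ∈ 𝓑 k, ∃ x : X, B = closedBall x s) ∧
      (∀ k, ∀ B ∈ 𝓑 k, ∀ C ∈ 𝓑 k, B ≠ C → ∀ x ∈ B, ∀ y ∈ C, s < dist x y) ∧
      (∀ E : Set X, EMetric.diam E ≤ ENNReal.ofReal s →
        ∃ T : Finset (Set X), T.card ≤ n + 1 ∧
          ∀ k, ∀ B ∈ 𝓑 k, (B ∩ E).Nonempty → B ∈ T) := by
  classical
  -- a maximal `s`-separated set
  obtain ⟨Y, hYmax⟩ := zorn_subset {Y : Set X | ∀ y ∈ Y, ∀ z ∈ Y, y ≠ z → s < dist y z} (by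
    intro c hcS hchain
    refine ⟨⋃₀ c, ?_, fun A hA => subset_sUnion_of_mem hA⟩
    rintro y ⟨A, hA, hyA⟩ z ⟨B, hB, hzB⟩ hyz
    rcases hchain.total hA hB with h | h
    · exact hcS hB y (h hyA) z hzB hyz
    · exact hcS hA y hyA z (h hzB) hyz)
  have hYsep : ∀ y ∈ Y, ∀ z ∈ Y, y ≠ z → s < dist y z := hYmax.prop
  -- `Y` is an `s`-net
  have hnet : ∀ x : X, ∃ y ∈ Y, dist x y ≤ s := by
    intro x
    by_contra h
    push_neg at h
    have hins : insert x Y ∈ {Y : Set X | ∀ y ∈ Y, ∀ z ∈ Y, y ≠ z → s < dist y z} := by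
      rintro y (rfl | hy) z (rfl | hz) hyz
      · exact absurd rfl hyz
      · exact h z hz
      · rw [dist_comm]; exact h y hy
      · exact hYsep y hy z hz hyz
    have hxY : x ∈ Y := hYmax.2 hins (subset_insert x Y) (mem_insert x Y)
    have := h x hxY
    simp [dist_self] at this
    linarith
  -- local finiteness: at most `n+1` points of `Y` in any closed ball of radius `3s`
  have hloc : ∀ x : X, ∃ T : Finset X, T.card ≤ n + 1 ∧ ∀ y ∈ Y, dist y x ≤ 3 * s → y ∈ T := by
    intro x
    obtain ⟨F, hFcard, hFcov, hFdiam⟩ := hdb x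
    set S : Set X := {y | y ∈ Y ∧ dist y x ≤ 3 * s} with hSdef
    have hmem : ∀ y : S, ∃ B : F, (y : X) ∈ (B : Set X) := by
      rintro ⟨y, hy, hyd⟩
      have : y ∈ ⋃₀ (F : Set (Set X)) := hFcov (by simpa [mem_closedBall] using hyd)
      obtain ⟨B, hB, hyB⟩ := this
      exact ⟨⟨B, by exact_mod_cast hB⟩, hyB⟩
    choose φ hφ using hmem
    have hinj : Function.Injective φ := by
      intro y z hyz
      ext
      by_contra hne
      have hzB : (z : X) ∈ ((φ y : Set X)) := by rw [hyz]; exact hφ z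
      have h5 : edist (y : X) (z : X) ≤ ENNReal.ofReal s :=
        (EMetric.edist_le_diam_of_mem (hφ y) hzB).trans (hFdiam _ (φ y).2)
      rw [edist_dist] at h5
      have h6 : dist (y : X) (z : X) ≤ s := (ENNReal.ofReal_le_ofReal_iff hs.le).mp h5
      have h7 : s < dist (y : X) (z : X) := hYsep _ y.2.1 _ z.2.1 hne
      linarith
    have : Finite S := Finite.of_injective φ hinj
    have hSfin : S.Finite := S.toFinite
    refine ⟨hSfin.toFinset, ?_, ?_⟩
    · have h1 : hSfin.toFinset.card = Nat.card S := by
        rw [Nat.card_eq_card_finite_toFinset hSfin]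
      have h2 : Nat.card S ≤ Nat.card F := Nat.card_le_card_of_injective φ hinj
      have h3 : Nat.card F = F.card := Nat.card_eq_finsetCard F
      omega
    · intro y hy hyd
      rw [Set.Finite.mem_toFinset]
      exact ⟨hy, hyd⟩
  -- graph of near pairs in Y, colored with n+1 colors
  set G : X → X → Prop := fun y z => y ∈ Y ∧ z ∈ Y ∧ y ≠ z ∧ dist y z ≤ 3 * s with hGdef
  have hsym : Symmetric G := by
    rintro y z ⟨h1, h2, h3, h4⟩
    exact ⟨h2, h1, h3.symm, by rwa [dist_comm]⟩
  have hirr : ∀ a, ¬ G a a := fun a h => h.2.2.1 rfl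
  have hdeg : ∀ a, ∃ F : Finset X, F.card ≤ n ∧ ∀ b, G a b → b ∈ F := by
    intro a
    by_cases ha : a ∈ Y
    · obtain ⟨T, hTcard, hT⟩ := hloc a
      have haT : a ∈ T := hT a ha (by rw [dist_self]; positivity)
      refine ⟨T.erase a, ?_, ?_⟩
      · rw [Finset.card_erase_of_mem haT]; omega
      · rintro b ⟨_, hbY, hab, habd⟩
        exact Finset.mem_erase.mpr ⟨fun h => hab h.symm, hT b hbY (by rwa [dist_comm])⟩
    · exact ⟨∅, by simp, fun b hb => absurd hb.1 ha⟩
  obtain ⟨c, hc⟩ := greedy_coloring n G hsym hirr hdeg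
  refine ⟨fun k => (fun y => closedBall y s) '' {y | y ∈ Y ∧ c y = k}, ?_, ?_, ?_, ?_⟩
  · apply eq_univ_of_forall
    intro x
    obtain ⟨y, hy, hxy⟩ := hnet x
    exact ⟨closedBall y s, mem_iUnion.mpr ⟨c y, ⟨y, ⟨hy, rfl⟩, rfl⟩⟩,
      by simpa [mem_closedBall] using hxy⟩
  · rintro k B ⟨y, _, rfl⟩
    exact ⟨y, rfl⟩
  · rintro k B ⟨u, ⟨huY, huc⟩, rfl⟩ C ⟨v, ⟨hvY, hvc⟩, rfl⟩ hBC x hx y hy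
    have huv : u ≠ v := fun h => hBC (h ▸ rfl)
    have hnG : ¬ G u v := fun h => hc u v h (huc.trans hvc.symm)
    have hd : 3 * s < dist u v := by
      by_contra h
      push_neg at h
      exact hnG ⟨huY, hvY, huv, h⟩
    rw [mem_closedBall] at hx hy
    have h1 : dist u v ≤ dist u x + dist x y + dist y v := dist_triangle4 u x y v
    rw [dist_comm u x] at h1
    linarith [dist_comm y v]
  · intro E hE
    by_cases hEne : E.Nonempty
    · obtain ⟨e₀, he₀⟩ := hEne
      obtain ⟨T, hTcard, hT⟩ := hloc e₀
      refine ⟨T.image (fun y => closedBall y s), Finset.card_image_le.trans hTcard, ?_⟩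
      rintro k B ⟨y, ⟨hyY, _⟩, rfl⟩ ⟨w, hwB, hwE⟩
      rw [mem_closedBall] at hwB
      have h5 : edist w e₀ ≤ ENNReal.ofReal s :=
        (EMetric.edist_le_diam_of_mem hwE he₀).trans hE
      rw [edist_dist] at h5
      have h6 : dist w e₀ ≤ s := (ENNReal.ofReal_le_ofReal_iff hs.le).mp h5
      have h7 : dist y e₀ ≤ 3 * s := by
        have := dist_triangle y w e₀
        rw [dist_comm y w] at this
        linarith
      exact Finset.mem_image.mpr ⟨y, hT y hyY h7, rfl⟩
    · refine ⟨∅, by simp, ?_⟩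
      intro k B _ h
      rw [not_nonempty_iff_eq_empty] at hEne
      simp [hEne] at h
end

section
/- Every doubling metric space has finite Nagata dimension. More precisely, if X is a metric space and N is an integer such that every closed ball of radius 3s in X can be covered by N+1 sets of diameter ≤ s (for all s > 0), then dim_N X ≤ N. -/
open Metric Set

/-!
Take a maximal `s`-separated set `D`; the closed `s`-balls around its points cover `X` and have
diameter `≤ 2s`. The centres of those balls that meet a set `E` of diameter `≤ s` lie within `2s`
of any point of `E`, so they lie in the union of `N + 1` sets of diameter `≤ s`, each of which
contains at most one point of the `s`-separated set `D`.
-/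

open scoped ENNReal

namespace Metric

variable {X : Type*} [PseudoEMetricSpace X]

theorem exists_maximal_isSeparated (ε : ℝ≥0∞) (s : Set X) :
    ∃ D, Maximal (fun D ↦ D ⊆ s ∧ IsSeparated ε D) D := by
  refine zorn_subset {D | D ⊆ s ∧ IsSeparated ε D} fun c hcS hc ↦
    ⟨⋃₀ c, ⟨sUnion_subset fun D hD ↦ (hcS hD).1, ?_⟩, fun D hD ↦ subset_sUnion_of_mem hD⟩
  exact (pairwise_sUnion hc.directedOn).2 fun D hD ↦ (hcS hD).2

theorem IsSeparated.encard_inter_sUnion_le {ε : ℝ≥0∞} {D : Set X} (hD : IsSeparated ε D)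
    {F : Finset (Set X)} (hF : ∀ B ∈ F, ediam B ≤ ε) : (D ∩ ⋃₀ ↑F).encard ≤ F.card := by
  choose! B hBF hxB using fun x (hx : x ∈ D ∩ ⋃₀ ↑F) ↦ hx.2
  rw [← encard_coe_eq_coe_finsetCard]
  refine encard_le_encard_of_injOn (fun x hx ↦ hBF x hx) fun x hx y hy hxy ↦ ?_
  by_contra hne
  refine (hD hx.1 hy.1 hne).not_ge (edist_le_of_ediam_le (hxB x hx) ?_ (hF _ (hBF x hx)))
  exact hxy ▸ hxB y hy

end Metric

theorem nagataProp_of_closedBall_two_mul_covered {X : Type*} [MetricSpace X] (N : ℕ)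
    (hcov : ∀ s : ℝ, 0 < s → ∀ x : X, ∃ F : Finset (Set X), F.card ≤ N + 1 ∧
      closedBall x (2 * s) ⊆ ⋃₀ ↑F ∧ ∀ B ∈ F, ediam B ≤ ENNReal.ofReal s) :
    NagataProp X N := by
  refine ⟨2, two_pos, fun s hs ↦ ?_⟩
  obtain ⟨D, hD⟩ := exists_maximal_isSeparated (X := X) (ENNReal.ofReal s) univ
  have hDcover : IsCover s.toNNReal univ D := IsCover.of_maximal_isSeparated hD
  refine ⟨(closedBall · s) '' D, ?_, ?_, fun E hE ↦ ?_⟩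
  · refine eq_univ_of_forall fun y ↦ ?_
    obtain ⟨x, hxD, hyx⟩ := hDcover (mem_univ y)
    refine ⟨closedBall x s, mem_image_of_mem _ hxD, ?_⟩
    rwa [← closedEBall_ofReal hs.le]
  · rintro _ ⟨x, -, rfl⟩
    change ediam (closedBall x s) ≤ _
    rw [← closedEBall_ofReal hs.le, ENNReal.ofReal_mul zero_le_two, ENNReal.ofReal_ofNat]
    exact ediam_closedEBall_le
  obtain rfl | ⟨e, he⟩ := E.eq_empty_or_nonempty
  · exact ⟨∅, by simp⟩
  obtain ⟨F, hFcard, hFcov, hFdiam⟩ := hcov s hs e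
  set C := {x ∈ D | (closedBall x s ∩ E).Nonempty}
  have hCF : C ⊆ D ∩ ⋃₀ ↑F := by
    rintro x ⟨hxD, y, hxy, hyE⟩
    refine ⟨hxD, hFcov ?_⟩
    have hye : dist y e ≤ s := by
      rw [← ENNReal.ofReal_le_ofReal_iff hs.le, ← edist_dist]
      exact edist_le_of_ediam_le hyE he hE
    rw [mem_closedBall] at hxy ⊢
    linarith [dist_triangle x y e, dist_comm x y]
  have hCcard : C.encard ≤ (N + 1 : ℕ) :=
    ((encard_le_encard hCF).trans (hD.prop.2.encard_inter_sUnion_le hFdiam)).trans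
      (by exact_mod_cast hFcard)
  have hCfin : C.Finite := finite_of_encard_le_coe hCcard
  refine ⟨hCfin.toFinset.image (closedBall · s), Finset.card_image_le.trans ?_, ?_⟩
  · rwa [hCfin.encard_eq_coe_toFinset_card, Nat.cast_le] at hCcard
  · rintro _ ⟨x, hxD, rfl⟩ hxE
    exact Finset.mem_image_of_mem _ (hCfin.mem_toFinset.2 ⟨hxD, hxE⟩)

theorem nagataDim_le_of_doubling {X : Type*} [MetricSpace X] (N : ℕ)
    (hdb : ∀ s : ℝ, 0 < s → ∀ x : X, ∃ F : Finset (Set X), F.card ≤ N + 1 ∧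
      closedBall x (3 * s) ⊆ ⋃₀ ↑F ∧ ∀ B ∈ F, EMetric.diam B ≤ ENNReal.ofReal s) :
    nagataDim X ≤ N := by
  refine sInf_le ⟨N, rfl, nagataProp_of_closedBall_two_mul_covered N fun s hs x ↦ ?_⟩
  obtain ⟨F, hFcard, hFcov, hFdiam⟩ := hdb s hs x
  exact ⟨F, hFcard, (closedBall_subset_closedBall (by linarith)).trans hFcov, hFdiam⟩
end

section
/- For every metric space X, the topological (covering) dimension of X is at most the Nagata dimension of X. -/
open Metric Set

/-- The covering (topological) dimension of a topological space, as an element of `ℕ∞`: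
the least `n` such that every open cover has an open refinement in which every point
lies in at most `n + 1` members. -/
noncomputable def covDim (X : Type*) [TopologicalSpace X] : ℕ∞ :=
  sInf {k : ℕ∞ | ∃ n : ℕ, k = n ∧
    ∀ U : Set (Set X), (∀ u ∈ U, IsOpen u) → ⋃₀ U = univ →
      ∃ V : Set (Set X), (∀ v ∈ V, IsOpen v) ∧ ⋃₀ V = univ ∧
        (∀ v ∈ V, ∃ u ∈ U, v ⊆ u) ∧
        ∀ x : X, ∃ T : Finset (Set X), T.card ≤ n + 1 ∧ ∀ v ∈ V, x ∈ v → v ∈ T}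

namespace CovNagataAux

variable {X : Type*} [MetricSpace X]

/-- Lebesgue-type radius function of the cover `U`, capped at `1`. -/
noncomputable def rad (U : Set (Set X)) (x : X) : ℝ :=
  sSup {t | t ≤ 1 ∧ (t ≤ 0 ∨ ∃ u ∈ U, ball x t ⊆ u)}

/-- The band of points whose radius is between `β` and `2β`. -/
def Phi (U : Set (Set X)) (β : ℝ) : Set X := {x | β ≤ rad U x ∧ rad U x ≤ 2 * β}

/-- Closed θ-neighbourhood of the band. -/
noncomputable def Cs (U : Set (Set X)) (β θ : ℝ) : Set X :=
  {y | (Phi U β).Nonempty ∧ infDist y (Phi U β) ≤ θ}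

lemma Cs_closed (U : Set (Set X)) (β θ : ℝ) : IsClosed (Cs U β θ) := by
  by_cases hne : (Phi U β).Nonempty
  · have h : Cs U β θ = {y | infDist y (Phi U β) ≤ θ} := by
      ext y; simp [Cs, hne]
    rw [h]
    exact isClosed_le (continuous_infDist_pt _) continuous_const
  · have h : Cs U β θ = ∅ := by
      ext y; simp [Cs, hne]
    rw [h]; exact isClosed_empty

/-- Open 3θ-fattening of a set. -/
def thick (θ : ℝ) (B : Set X) : Set X := ⋃ b ∈ B, ball b (3 * θ)

/-- The family of fattened Nagata pieces near the band. -/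
def Gf (U : Set (Set X)) (𝓑i : Set (Set X)) (β θ : ℝ) : Set (Set X) :=
  {P | ∃ B ∈ 𝓑i, (∃ y ∈ B, ∃ z ∈ Phi U β, dist y z ≤ 4 * θ) ∧ P = thick θ B}

lemma asg_ex (U : Set (Set X)) (t₀ : ↥U) (Wc : ↥U → Set X) (P : Set X) :
    ∃ t : ↥U, (∃ t', P ⊆ Wc t') → P ⊆ Wc t := by
  by_cases h : ∃ t', P ⊆ Wc t'
  · exact ⟨h.choose, fun _ => h.choose_spec⟩
  · exact ⟨t₀, fun h' => absurd h' h⟩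

/-- assignment of a piece to an index of the current cover containing it -/
noncomputable def asg (U : Set (Set X)) (t₀ : ↥U) (Wc : ↥U → Set X) (P : Set X) : ↥U :=
  (asg_ex U t₀ Wc P).choose

lemma asg_spec (U : Set (Set X)) (t₀ : ↥U) (Wc : ↥U → Set X) (P : Set X)
    (h : ∃ t, P ⊆ Wc t) : P ⊆ Wc (asg U t₀ Wc P) :=
  (asg_ex U t₀ Wc P).choose_spec h

/-- amalgamation of the assigned pieces -/
noncomputable def hatW (U : Set (Set X)) (t₀ : ↥U) (Gi : Set (Set X)) (Wc : ↥U → Set X)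
    (t : ↥U) : Set X :=
  ⋃₀ {P | P ∈ Gi ∧ (∃ t', P ⊆ Wc t') ∧ asg U t₀ Wc P = t}

/-- the recursively shrunk covers -/
noncomputable def Wseq (U : Set (Set X)) (t₀ : ↥U) (𝓑 : ℕ → Set (Set X)) (β θ : ℕ → ℝ) :
    ℕ → ↥U → Set X := fun i => Nat.rec (fun t => (t : Set X))
  (fun i Wi t => hatW U t₀ (Gf U (𝓑 i) (β i) (θ i)) Wi t ∪ (Wi t \ Cs U (β i) (θ i))) i

end CovNagataAux

open CovNagataAux in
theorem keyRefine {X : Type*} [MetricSpace X] {n : ℕ} (hNP : NagataProp X n)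
    (U : Set (Set X)) (hUo : ∀ u ∈ U, IsOpen u) (hUc : ⋃₀ U = univ) :
    ∃ V : Set (Set X), (∀ v ∈ V, IsOpen v) ∧ ⋃₀ V = univ ∧
      (∀ v ∈ V, ∃ u ∈ U, v ⊆ u) ∧
      ∀ x : X, ∃ T : Finset (Set X), T.card ≤ n + 1 ∧ ∀ v ∈ V, x ∈ v → v ∈ T := by
  classical
  rcases isEmpty_or_nonempty X with hX | hX
  · refine ⟨∅, by simp, ?_, by simp, fun x => (IsEmpty.false x).elim⟩
    simp [Set.eq_empty_of_isEmpty (univ : Set X)]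
  -- basic data
  obtain ⟨c, hc0, hN⟩ := hNP
  set κ : ℝ := (100 * (c + 1))⁻¹ with hκdef
  have hκpos : 0 < κ := by rw [hκdef]; positivity
  have hκhalf : κ ≤ 1 / 2 := by
    rw [hκdef, inv_le_comm₀ (by positivity) (by norm_num)]; linarith
  have hκlt1 : κ < 1 := lt_of_le_of_lt hκhalf (by norm_num)
  set θ : ℕ → ℝ := fun i => κ ^ (i + 1) with hθdef
  have hθpos : ∀ i, 0 < θ i := fun i => pow_pos hκpos _
  set β : ℕ → ℝ := fun i => (1 / 2 : ℝ) ^ i with hβdef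
  have hβpos : ∀ i, 0 < β i := fun i => pow_pos (by norm_num) _
  have hβmono : ∀ i j, i ≤ j → β j ≤ β i := fun i j hij =>
    pow_le_pow_of_le_one (by norm_num) (by norm_num) hij
  have hθβ : ∀ i, θ i ≤ β i * κ := by
    intro i
    have : κ ^ i ≤ (1 / 2 : ℝ) ^ i := pow_le_pow_left₀ hκpos.le hκhalf i
    calc θ i = κ ^ i * κ := by rw [hθdef]; ring
      _ ≤ (1 / 2 : ℝ) ^ i * κ := by nlinarith [hκpos]
      _ = β i * κ := rfl
  have hDκ : (10 * c + 7) * κ ≤ 1 / 2 := by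
    rw [hκdef]
    rw [mul_inv_le_iff₀ (by positivity)]; linarith
  have hDθβ : ∀ i, (10 * c + 7) * θ i ≤ β i / 2 := by
    intro i
    calc (10 * c + 7) * θ i ≤ (10 * c + 7) * (β i * κ) := by
          have := hθβ i; nlinarith [hβpos i]
      _ = ((10 * c + 7) * κ) * β i := by ring
      _ ≤ (1 / 2) * β i := by nlinarith [hβpos i, hDκ]
      _ = β i / 2 := by ring
  have hDθκ : ∀ i, (10 * c + 7) * θ i ≤ κ ^ i := by
    intro i
    calc (10 * c + 7) * θ i = ((10 * c + 7) * κ) * κ ^ i := by rw [hθdef]; ring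
      _ ≤ (1/2) * κ ^ i := by nlinarith [pow_pos hκpos i]
      _ ≤ κ ^ i := by nlinarith [pow_pos hκpos i]
  -- facts about rad
  set r : X → ℝ := rad U with hrdef
  have hS0 : ∀ x : X, (0:ℝ) ∈ {t | t ≤ 1 ∧ (t ≤ 0 ∨ ∃ u ∈ U, ball x t ⊆ u)} :=
    fun x => ⟨by norm_num, Or.inl le_rfl⟩
  have hSbdd : ∀ x : X, BddAbove {t | t ≤ 1 ∧ (t ≤ 0 ∨ ∃ u ∈ U, ball x t ⊆ u)} :=
    fun x => ⟨1, fun t ht => ht.1⟩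
  have hrle1 : ∀ x, r x ≤ 1 := fun x => csSup_le ⟨0, hS0 x⟩ fun t ht => ht.1
  have hrpos : ∀ x, 0 < r x := by
    intro x
    have hx : x ∈ ⋃₀ U := by rw [hUc]; trivial
    obtain ⟨u, hu, hxu⟩ := hx
    obtain ⟨ε, hε, hb⟩ := Metric.isOpen_iff.mp (hUo u hu) x hxu
    have hmem : min (ε / 2) 1 ∈ {t | t ≤ 1 ∧ (t ≤ 0 ∨ ∃ u ∈ U, ball x t ⊆ u)} := by
      refine ⟨min_le_right _ _, Or.inr ⟨u, hu, subset_trans (ball_subset_ball ?_) hb⟩⟩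
      calc min (ε / 2) 1 ≤ ε / 2 := min_le_left _ _
        _ ≤ ε := by linarith
    have := le_csSup (hSbdd x) hmem
    have h2 : 0 < min (ε / 2) 1 := lt_min (by linarith) one_pos
    exact lt_of_lt_of_le h2 this
  have hrball : ∀ x t, t < r x → ∃ u ∈ U, ball x t ⊆ u := by
    intro x t ht
    rcases le_or_gt t 0 with h | h
    · obtain ⟨u, hu⟩ : ∃ u, u ∈ U := by
        have hx : (hX.some : X) ∈ ⋃₀ U := by rw [hUc]; trivial
        obtain ⟨u, hu, _⟩ := hx; exact ⟨u, hu⟩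
      exact ⟨u, hu, by rw [ball_eq_empty.mpr h]; exact empty_subset _⟩
    · obtain ⟨t', ht'S, htt'⟩ := exists_lt_of_lt_csSup ⟨0, hS0 x⟩ ht
      rcases ht'S.2 with h0 | ⟨u, hu, hb⟩
      · linarith
      · exact ⟨u, hu, subset_trans (ball_subset_ball htt'.le) hb⟩
  have hrlip : ∀ x y : X, r x ≤ r y + dist x y := by
    intro x y
    apply csSup_le ⟨0, hS0 x⟩
    intro t ht
    rcases ht.2 with h0 | ⟨u, hu, hb⟩
    · have := hrpos y; have := dist_nonneg (x := x) (y := y); linarith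
    · rcases le_or_gt (t - dist x y) 0 with h | h
      · have := hrpos y; linarith
      · have hmem : t - dist x y ∈ {s | s ≤ 1 ∧ (s ≤ 0 ∨ ∃ u ∈ U, ball y s ⊆ u)} := by
          refine ⟨by have := dist_nonneg (x := x) (y := y); linarith [ht.1], Or.inr ⟨u, hu, ?_⟩⟩
          intro z hz
          apply hb
          rw [mem_ball] at hz ⊢
          calc dist z x ≤ dist z y + dist y x := dist_triangle _ _ _
            _ < (t - dist x y) + dist y x := by linarith
            _ = t := by rw [dist_comm y x]; ring
        have h2 : t - dist x y ≤ r y := le_csSup (hSbdd y) hmem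
        linarith
  -- Nagata covers at every scale
  have hNn : ∀ i : ℕ, ∃ 𝓑 : Set (Set X), (⋃₀ 𝓑 = univ) ∧
      (∀ B ∈ 𝓑, EMetric.diam B ≤ ENNReal.ofReal (c * (10 * θ i))) ∧
      (∀ E : Set X, EMetric.diam E ≤ ENNReal.ofReal (10 * θ i) →
        ∃ T : Finset (Set X), T.card ≤ n + 1 ∧ ∀ B ∈ 𝓑, (B ∩ E).Nonempty → B ∈ T) :=
    fun i => hN (10 * θ i) (by have := hθpos i; linarith)
  choose 𝓑 h𝓑cov h𝓑diam h𝓑mult using hNn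
  have hBdist : ∀ i B, B ∈ 𝓑 i → ∀ a ∈ B, ∀ b ∈ B, dist a b ≤ 10 * c * θ i := by
    intro i B hB a ha b hb
    have h1 : edist a b ≤ ENNReal.ofReal (c * (10 * θ i)) :=
      le_trans (EMetric.edist_le_diam_of_mem ha hb) (h𝓑diam i B hB)
    rw [edist_dist] at h1
    have h2 := (ENNReal.ofReal_le_ofReal_iff (by have := hθpos i; positivity)).mp h1
    linarith
  -- index and W
  obtain ⟨u₀, hu₀⟩ : ∃ u, u ∈ U := by
    have hx : (hX.some : X) ∈ ⋃₀ U := by rw [hUc]; trivial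
    obtain ⟨u, hu, _⟩ := hx; exact ⟨u, hu⟩
  set t₀ : ↥U := ⟨u₀, hu₀⟩ with ht₀
  set W : ℕ → ↥U → Set X := Wseq U t₀ 𝓑 β θ with hWdef
  have hW0 : ∀ t, W 0 t = (t : Set X) := fun t => rfl
  have hWs : ∀ i t, W (i + 1) t =
      hatW U t₀ (Gf U (𝓑 i) (β i) (θ i)) (W i) t ∪ (W i t \ Cs U (β i) (θ i)) :=
    fun i t => rfl
  -- pieces are small and sit near the band
  have hGball : ∀ i P, P ∈ Gf U (𝓑 i) (β i) (θ i) →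
      ∃ z ∈ Phi U (β i), P ⊆ ball z ((10 * c + 7) * θ i) := by
    intro i P hP
    obtain ⟨B, hB, ⟨y, hyB, z, hzΦ, hyz⟩, rfl⟩ := hP
    refine ⟨z, hzΦ, ?_⟩
    intro p hp
    rw [thick, mem_iUnion₂] at hp
    obtain ⟨b, hbB, hpb⟩ := hp
    rw [mem_ball] at hpb ⊢
    have h1 : dist b y ≤ 10 * c * θ i := hBdist i B hB b hbB y hyB
    calc dist p z ≤ dist p b + dist b y + dist y z := dist_triangle4 p b y z
      _ < 3 * θ i + 10 * c * θ i + 4 * θ i := by linarith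
      _ = (10 * c + 7) * θ i := by ring
  -- the key invariant: Lebesgue balls for W i
  have hINV : ∀ i, ∀ x : X, ∃ t : ↥U, ball x (min (r x / 2) (κ ^ i)) ⊆ W i t := by
    intro i
    induction i with
    | zero =>
      intro x
      have h1 : min (r x / 2) (κ ^ 0) < r x :=
        lt_of_le_of_lt (min_le_left _ _) (by linarith [hrpos x])
      obtain ⟨u, hu, hb⟩ := hrball x _ h1
      exact ⟨⟨u, hu⟩, hb⟩
    | succ i ih =>
      intro x
      by_cases hcase : (Phi U (β i)).Nonempty ∧ infDist x (Phi U (β i)) ≤ 2 * θ i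
      · obtain ⟨hne, hinf⟩ := hcase
        have hinf3 : infDist x (Phi U (β i)) < 3 * θ i := by
          have := hθpos i; linarith
        obtain ⟨z, hzΦ, hz⟩ := (infDist_lt_iff hne).mp hinf3
        have hxB : ∃ B ∈ 𝓑 i, x ∈ B := by
          have hx : x ∈ ⋃₀ 𝓑 i := by rw [h𝓑cov i]; trivial
          obtain ⟨B, hB, hxB⟩ := hx; exact ⟨B, hB, hxB⟩
        obtain ⟨B, hB, hxB⟩ := hxB
        have hPG : thick (θ i) B ∈ Gf U (𝓑 i) (β i) (θ i) :=
          ⟨B, hB, ⟨x, hxB, z, hzΦ, by have := hθpos i; linarith⟩, rfl⟩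
        have hPsub : ∃ t', thick (θ i) B ⊆ W i t' := by
          obtain ⟨z', hz'Φ, hPb⟩ := hGball i _ hPG
          obtain ⟨t', ht'⟩ := ih z'
          refine ⟨t', subset_trans hPb (subset_trans (ball_subset_ball ?_) ht')⟩
          apply le_min
          · have h5 : β i ≤ r z' := hz'Φ.1
            have := hDθβ i
            linarith
          · exact hDθκ i
        refine ⟨asg U t₀ (W i) (thick (θ i) B), ?_⟩
        intro y hy
        rw [hWs i (asg U t₀ (W i) (thick (θ i) B))]
        left
        refine ⟨thick (θ i) B, ⟨hPG, hPsub, rfl⟩, ?_⟩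
        have h6 : min (r x / 2) (κ ^ (i + 1)) ≤ 3 * θ i := by
          have : κ ^ (i+1) = θ i := rfl
          calc min (r x / 2) (κ ^ (i + 1)) ≤ κ ^ (i + 1) := min_le_right _ _
            _ = θ i := rfl
            _ ≤ 3 * θ i := by linarith [hθpos i]
        have h7 : y ∈ ball x (3 * θ i) := ball_subset_ball h6 hy
        simp only [thick, mem_iUnion₂]
        exact ⟨x, hxB, h7⟩
      · -- untouched case
        have hCdisj : ∀ y, y ∈ ball x (θ i) → y ∉ Cs U (β i) (θ i) := by
          intro y hy hyC
          obtain ⟨hne, hyle⟩ := hyC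
          have h8 : infDist x (Phi U (β i)) ≤ infDist y (Phi U (β i)) + dist x y :=
            infDist_le_infDist_add_dist
          rw [mem_ball, dist_comm] at hy
          have h9 : infDist x (Phi U (β i)) ≤ 2 * θ i := by
            have := hθpos i; linarith
          exact hcase ⟨hne, h9⟩
        obtain ⟨t, ht⟩ := ih x
        refine ⟨t, ?_⟩
        intro y hy
        rw [hWs i t]
        right
        constructor
        · apply ht
          exact ball_subset_ball (min_le_min le_rfl
            (pow_le_pow_of_le_one hκpos.le hκlt1.le (by omega))) hy
        · apply hCdisj
          refine ball_subset_ball ?_ hy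
          calc min (r x / 2) (κ ^ (i + 1)) ≤ κ ^ (i + 1) := min_le_right _ _
            _ = θ i := rfl
  -- basic consequences
  have hWcover : ∀ i (x : X), ∃ t, x ∈ W i t := by
    intro i x
    obtain ⟨t, ht⟩ := hINV i x
    exact ⟨t, ht (mem_ball_self (lt_min (by linarith [hrpos x]) (pow_pos hκpos i)))⟩
  have hWshrink : ∀ i t, W (i + 1) t ⊆ W i t := by
    intro i t y hy
    rw [hWs i t] at hy
    rcases hy with hy | hy
    · obtain ⟨P, ⟨hPG, hPsub, hPasg⟩, hyP⟩ := hy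
      have := asg_spec U t₀ (W i) P hPsub
      rw [hPasg] at this
      exact this hyP
    · exact hy.1
  have hWmono : ∀ t i j, i ≤ j → W j t ⊆ W i t := by
    intro t i j hij
    induction j, hij using Nat.le_induction with
    | base => exact subset_rfl
    | succ j hij ihj => exact subset_trans (hWshrink j t) ihj
  have hWsubU : ∀ i t, W i t ⊆ (t : Set X) := fun i t => hWmono t 0 i (Nat.zero_le i)
  have hWopen : ∀ i t, IsOpen (W i t) := by
    intro i
    induction i with
    | zero => intro t; exact hUo t t.2
    | succ i ih =>
      intro t
      rw [show W (i+1) t = hatW U t₀ (Gf U (𝓑 i) (β i) (θ i)) (W i) t ∪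
        (W i t \ Cs U (β i) (θ i)) from rfl]
      apply IsOpen.union
      · apply isOpen_sUnion
        intro P hP
        obtain ⟨⟨B, hB, _, rfl⟩, _, _⟩ := hP
        exact isOpen_biUnion fun b _ => isOpen_ball
      · exact IsOpen.sdiff (ih t) (Cs_closed U (β i) (θ i))
  -- every point is in some band
  have hLevel : ∀ x : X, ∃ i, x ∈ Phi U (β i) := by
    intro x
    have hex : ∃ i : ℕ, β i ≤ r x := by
      obtain ⟨i, hi⟩ := exists_pow_lt_of_lt_one (hrpos x) (by norm_num : (1/2 : ℝ) < 1)
      exact ⟨i, hi.le⟩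
    refine ⟨Nat.find hex, ?_⟩
    simp only [Phi, mem_setOf_eq]
    refine ⟨Nat.find_spec hex, ?_⟩
    rcases Nat.eq_zero_or_pos (Nat.find hex) with h | h
    · rw [h]
      have : β 0 = 1 := by rw [hβdef]; norm_num
      rw [this]
      linarith [hrle1 x]
    · have hmin := Nat.find_min hex (m := Nat.find hex - 1) (by omega)
      push_neg at hmin
      have hsplit : β (Nat.find hex - 1) = 2 * β (Nat.find hex) := by
        simp only [hβdef]
        have h9 : Nat.find hex - 1 + 1 = Nat.find hex := by omega
        calc (1/2 : ℝ) ^ (Nat.find hex - 1) =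
            2 * ((1/2 : ℝ) ^ (Nat.find hex - 1) * (1/2)) := by ring
          _ = 2 * (1/2 : ℝ) ^ (Nat.find hex - 1 + 1) := by rw [pow_succ]
          _ = 2 * (1/2 : ℝ) ^ (Nat.find hex) := by rw [h9]
      rw [← hsplit]
      exact hmin.le
  -- order bound at a band point
  have hOrder : ∀ i (x : X), x ∈ Phi U (β i) →
      ∃ Tf : Finset ↥U, Tf.card ≤ n + 1 ∧ ∀ t, x ∈ W (i + 1) t → t ∈ Tf := by
    intro i x hx
    have hdiam : EMetric.diam (closedBall x (3 * θ i)) ≤ ENNReal.ofReal (10 * θ i) := by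
      apply EMetric.diam_le
      intro a ha b hb
      rw [mem_closedBall] at ha hb
      rw [edist_dist]
      apply ENNReal.ofReal_le_ofReal
      calc dist a b ≤ dist a x + dist x b := dist_triangle _ _ _
        _ = dist a x + dist b x := by rw [dist_comm x b]
        _ ≤ 3 * θ i + 3 * θ i := by linarith
        _ ≤ 10 * θ i := by linarith [hθpos i]
    obtain ⟨T, hTcard, hT⟩ := h𝓑mult i (closedBall x (3 * θ i)) hdiam
    refine ⟨T.image (fun B => asg U t₀ (W i) (thick (θ i) B)),
      le_trans Finset.card_image_le hTcard, ?_⟩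
    intro t ht
    rw [hWs i t] at ht
    rcases ht with hhat | ⟨_, hC⟩
    · obtain ⟨P, ⟨hPG, hPsub, hPasg⟩, hxP⟩ := hhat
      obtain ⟨B, hB, _, rfl⟩ := hPG
      simp only [thick, mem_iUnion₂] at hxP
      obtain ⟨b, hbB, hxb⟩ := hxP
      have hBT : B ∈ T := by
        apply hT B hB
        refine ⟨b, hbB, ?_⟩
        rw [mem_closedBall]
        rw [mem_ball, dist_comm] at hxb
        exact hxb.le
      exact Finset.mem_image.mpr ⟨B, hBT, hPasg⟩
    · exfalso
      apply hC
      refine ⟨⟨x, hx⟩, ?_⟩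
      rw [infDist_zero_of_mem hx]
      exact (hθpos i).le
  -- stabilization
  have hStab : ∀ x : X, ∃ ρ > 0, ∃ I : ℕ, ∀ j, I ≤ j → ∀ t,
      W j t ∩ ball x ρ = W I t ∩ ball x ρ := by
    intro x
    obtain ⟨I, hI⟩ : ∃ I : ℕ, 4 * β I < 3 / 4 * r x := by
      obtain ⟨I, hI⟩ := exists_pow_lt_of_lt_one
        (show (0:ℝ) < 3/16 * r x by have := hrpos x; linarith)
        (by norm_num : (1/2 : ℝ) < 1)
      refine ⟨I, ?_⟩
      have : β I = (1/2 : ℝ) ^ I := rfl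
      rw [this]; linarith
    refine ⟨r x / 4, by linarith [hrpos x], I, ?_⟩
    intro j hj t
    induction j, hj using Nat.le_induction with
    | base => rfl
    | succ j hj ihj =>
      rw [← ihj]
      rw [hWs j t]
      have hsmall : ∀ p : X, p ∈ ball x (r x / 4) → 4 * β j < r p := by
        intro p hp
        rw [mem_ball, dist_comm] at hp
        have h10 : r x ≤ r p + dist x p := hrlip x p
        have h11 : 4 * β j ≤ 4 * β I := by have := hβmono I j hj; linarith
        linarith
      apply Set.eq_of_subset_of_subset
      · rintro p ⟨hp1, hp2⟩
        rcases hp1 with hp1 | hp1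
        · exfalso
          obtain ⟨P, ⟨hPG, _, _⟩, hpP⟩ := hp1
          obtain ⟨z, hzΦ, hPb⟩ := hGball j P hPG
          have h12 : dist p z < (10 * c + 7) * θ j := mem_ball.mp (hPb hpP)
          have h13 : r p ≤ r z + dist p z := hrlip p z
          have h14 : r z ≤ 2 * β j := hzΦ.2
          have h15 := hDθβ j
          have h16 := hsmall p hp2
          have := hβpos j
          linarith
        · exact ⟨hp1.1, hp2⟩
      · rintro p ⟨hp1, hp2⟩
        refine ⟨Or.inr ⟨hp1, ?_⟩, hp2⟩
        rintro ⟨hne, hpC⟩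
        have hpC2 : infDist p (Phi U (β j)) < 2 * θ j := by
          have := hθpos j; linarith
        obtain ⟨z, hzΦ, hpz⟩ := (infDist_lt_iff hne).mp hpC2
        have h13 : r p ≤ r z + dist p z := hrlip p z
        have h14 : r z ≤ 2 * β j := hzΦ.2
        have h17 : θ j ≤ β j / 2 := by
          have := hθβ j
          have := hβpos j
          nlinarith [hκhalf, hκpos]
        have h16 := hsmall p hp2
        have := hβpos j
        linarith
  -- the limit cover
  set Vf : ↥U → Set X := fun t => {x | ∃ I, ∀ j, I ≤ j → x ∈ W j t} with hVfdef
  refine ⟨{v | ∃ t, v = Vf t}, ?_, ?_, ?_, ?_⟩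
  · rintro v ⟨t, rfl⟩
    rw [_root_.isOpen_iff_mem_nhds]
    intro x hx
    obtain ⟨ρ, hρ, I₁, hstab⟩ := hStab x
    obtain ⟨I₂, hI₂⟩ := hx
    set I := max I₁ I₂ with hIdef
    have hxW : x ∈ W I t ∩ ball x ρ := ⟨hI₂ I (le_max_right _ _), mem_ball_self hρ⟩
    rw [_root_.mem_nhds_iff]
    refine ⟨W I t ∩ ball x ρ, ?_, (hWopen I t).inter isOpen_ball, hxW⟩
    intro y hy
    refine ⟨I, fun j hj => ?_⟩
    have h18 : W j t ∩ ball x ρ = W I t ∩ ball x ρ := by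
      rw [hstab j (le_trans (le_max_left _ _) hj) t, hstab I (le_max_left _ _) t]
    have : y ∈ W j t ∩ ball x ρ := by rw [h18]; exact hy
    exact this.1
  · rw [eq_univ_iff_forall]
    intro x
    obtain ⟨ρ, hρ, I₁, hstab⟩ := hStab x
    obtain ⟨t, hxt⟩ := hWcover I₁ x
    refine ⟨Vf t, ⟨t, rfl⟩, I₁, fun j hj => ?_⟩
    have : x ∈ W j t ∩ ball x ρ := by
      rw [hstab j hj t]
      exact ⟨hxt, mem_ball_self hρ⟩
    exact this.1
  · rintro v ⟨t, rfl⟩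
    refine ⟨(t : Set X), t.2, ?_⟩
    rintro x ⟨I, hI⟩
    exact hWsubU I t (hI I le_rfl)
  · intro x
    obtain ⟨i, hxΦ⟩ := hLevel x
    obtain ⟨Tf, hcard, hTf⟩ := hOrder i x hxΦ
    refine ⟨Tf.image (fun t => Vf t), le_trans Finset.card_image_le hcard, ?_⟩
    rintro v ⟨t, rfl⟩ hxv
    obtain ⟨I, hI⟩ := hxv
    have hxW : x ∈ W (i + 1) t := by
      have h19 : x ∈ W (max I (i + 1)) t := hI _ (le_max_left _ _)
      exact hWmono t (i + 1) (max I (i + 1)) (le_max_right _ _) h19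
    exact Finset.mem_image.mpr ⟨t, hTf t hxW, rfl⟩

theorem covDim_le_nagataDim (X : Type*) [MetricSpace X] : covDim X ≤ nagataDim X := by
  apply le_sInf
  rintro b ⟨n, rfl, hNP⟩
  apply sInf_le
  exact ⟨n, rfl, fun U hUo hUc => keyRefine hNP U hUo hUc⟩
end

section
/- The compact metric space X = {0} ∪ {1/k : k ≥ 1}, with the metric induced from ℝ, satisfies dim_N X = 1; in particular its Nagata dimension strictly exceeds its topological dimension, which is 0. -/
open Metric Set

/-!
Cutting `ℝ` into the half-open intervals `[j s, (j + 1) s)` shows that every subspace of `ℝ` has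
Nagata dimension at most `1`. Conversely, if the harmonic sequence had Nagata dimension `0`, two
points at distance `≤ s` would always lie in a common member of the covering, so a whole
`s`-chain lies in one member. For `s = 1 / (K (K + 1))` the points `1 / K, 1 / (K + 1), …` form an
`s`-chain reaching `0`, so the diameter bound `c s ≥ 1 / K` forces `c ≥ K + 1` for every `K`.
Topologically the space has a single non-isolated point, so every open cover is refined by one
member containing `0` together with the singletons outside it.
-/

open Relation

section NagataDim

variable {X Y : Type*} [MetricSpace X] [MetricSpace Y]

theorem nagataDim_le {n : ℕ} (h : NagataProp X n) : nagataDim X ≤ n :=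
  sInf_le ⟨n, rfl, h⟩

theorem le_nagataDim {n : ℕ} (h : ∀ m < n, ¬ NagataProp X m) : (n : ℕ∞) ≤ nagataDim X :=
  le_sInf <| by
    rintro _ ⟨m, rfl, hm⟩
    exact_mod_cast not_lt.mp fun hlt => h m hlt hm

theorem NagataProp.of_isometry {f : X → Y} (hf : Isometry f) {n : ℕ} (h : NagataProp Y n) :
    NagataProp X n := by
  classical
  obtain ⟨c, hc, H⟩ := h
  refine ⟨c, hc, fun s hs => ?_⟩
  obtain ⟨𝓑, hcov, hdiam, hmult⟩ := H s hs
  refine ⟨preimage f '' 𝓑, ?_, ?_, fun E hE => ?_⟩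
  · rw [sUnion_image, ← preimage_sUnion, hcov, preimage_univ]
  · rintro _ ⟨B, hB, rfl⟩
    exact (hf.ediam_image _).symm.trans_le
      ((ediam_mono (image_preimage_subset f B)).trans (hdiam B hB))
  · obtain ⟨T, hT, hTE⟩ := hmult (f '' E) ((hf.ediam_image E).trans_le hE)
    refine ⟨T.image (preimage f), Finset.card_image_le.trans hT, ?_⟩
    rintro _ ⟨B, hB, rfl⟩ ⟨x, hxB, hxE⟩
    exact Finset.mem_image_of_mem _ (hTE B hB ⟨f x, hxB, x, hxE, rfl⟩)

theorem nagataProp_real_one : NagataProp ℝ 1 := by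
  refine ⟨1, one_pos, fun s hs => ?_⟩
  set q : ℝ → ℤ := fun x => ⌊x / s⌋
  refine ⟨range fun j => q ⁻¹' {j}, ?_, ?_, fun E hE => ?_⟩
  · exact sUnion_eq_univ_iff.mpr fun x => ⟨_, mem_range_self (q x), rfl⟩
  · rintro _ ⟨j, rfl⟩
    refine ediam_le fun x hx y hy => ?_
    rw [one_mul, edist_le_ofReal hs.le, Real.dist_eq]
    have h := Int.abs_sub_lt_one_of_floor_eq_floor (hx.trans hy.symm)
    rw [← sub_div, abs_div, abs_of_pos hs, div_lt_one hs] at h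
    exact h.le
  rcases E.eq_empty_or_nonempty with rfl | hne
  · exact ⟨∅, by simp, by simp⟩
  have hbdd : BddBelow E :=
    (isBounded_iff_ediam_ne_top.mpr (hE.trans_lt ENNReal.ofReal_lt_top).ne).bddBelow
  set m := sInf E
  have hm : ∀ x ∈ E, m ≤ x ∧ x ≤ m + s := fun x hx =>
    ⟨csInf_le hbdd hx, sub_le_iff_le_add.mp <| le_csInf hne fun y hy => by
      have hxy := (edist_le_ofReal hs.le).mp ((edist_le_ediam_of_mem hx hy).trans hE)
      linarith [le_abs_self (x - y), Real.dist_eq x y]⟩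
  refine ⟨{q ⁻¹' {q m}, q ⁻¹' {q m + 1}}, Finset.card_le_two, ?_⟩
  rintro _ ⟨j, rfl⟩ ⟨x, rfl, hxE⟩
  have hlo : q m ≤ q x := Int.floor_mono (div_le_div_of_nonneg_right (hm x hxE).1 hs.le)
  have hhi : q x ≤ q m + 1 := by
    refine (Int.floor_mono ?_).trans_eq (Int.floor_add_one (m / s))
    rw [div_add_one hs.ne']
    exact div_le_div_of_nonneg_right (hm x hxE).2 hs.le
  obtain h | h : q x = q m ∨ q x = q m + 1 := by omega
  all_goals simp [h]

theorem NagataProp.exists_dist_le_of_reflTransGen (h : NagataProp X 0) :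
    ∃ c > 0, ∀ s > 0, ∀ x y : X, ReflTransGen (fun a b => dist a b ≤ s) x y → dist x y ≤ c * s := by
  obtain ⟨c, hc, H⟩ := h
  refine ⟨c, hc, fun s hs x y hxy => ?_⟩
  obtain ⟨𝓑, hcov, hdiam, hmult⟩ := H s hs
  have hmem := sUnion_eq_univ_iff.mp hcov
  have stays : ∀ {a b B}, B ∈ 𝓑 → a ∈ B → dist a b ≤ s → b ∈ B := by
    intro a b B hB ha hab
    obtain ⟨B', hB', hb⟩ := hmem b
    obtain ⟨T, hT, hTab⟩ := hmult {a, b} (ediam_pair.trans_le ((edist_le_ofReal hs.le).mpr hab))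
    have : B' = B := Finset.card_le_one.mp hT _ (hTab B' hB' ⟨b, hb, by simp⟩) _
      (hTab B hB ⟨a, ha, by simp⟩)
    exact this ▸ hb
  obtain ⟨B, hB, hx⟩ := hmem x
  have hy : y ∈ B := by
    induction hxy with
    | refl => exact hx
    | tail _ hbc ih => exact stays hB ih hbc
  exact (edist_le_ofReal (by positivity)).mp ((edist_le_ediam_of_mem hx hy).trans (hdiam B hB))

end NagataDim

theorem covDim_eq_zero_of_forall_ne_isOpen_singleton {X : Type*} [TopologicalSpace X] (z : X)
    (h : ∀ x ≠ z, IsOpen {x}) : covDim X = 0 := by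
  classical
  refine nonpos_iff_eq_zero.mp (sInf_le ⟨0, Nat.cast_zero.symm, fun U hU hcov => ?_⟩)
  obtain ⟨u, hu, hz⟩ := sUnion_eq_univ_iff.mp hcov z
  refine ⟨insert u ((fun x => {x}) '' uᶜ), ?_, ?_, ?_, fun x => ?_⟩
  · rintro v (rfl | ⟨x, hx, rfl⟩)
    · exact hU v hu
    · exact h x fun e => hx (e ▸ hz)
  · refine sUnion_eq_univ_iff.mpr fun x => ?_
    by_cases hx : x ∈ u
    · exact ⟨u, mem_insert _ _, hx⟩
    · exact ⟨{x}, mem_insert_of_mem _ ⟨x, hx, rfl⟩, rfl⟩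
  · rintro v (rfl | ⟨x, -, rfl⟩)
    · exact ⟨v, hu, subset_rfl⟩
    · obtain ⟨w, hw, hxw⟩ := sUnion_eq_univ_iff.mp hcov x
      exact ⟨w, hw, singleton_subset_iff.mpr hxw⟩
  by_cases hx : x ∈ u
  · refine ⟨{u}, by simp, ?_⟩
    rintro v (rfl | ⟨y, hy, rfl⟩) hxv
    · simp
    · exact absurd (mem_singleton_iff.mp hxv ▸ hx) hy
  · refine ⟨{{x}}, by simp, ?_⟩
    rintro v (rfl | ⟨y, -, rfl⟩) hxv
    · exact absurd hxv hx
    · simp [mem_singleton_iff.mp hxv]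

abbrev HarmonicSeq : Type := {x : ℝ // x = 0 ∨ ∃ k : ℕ, 1 ≤ k ∧ x = 1 / k}

namespace HarmonicSeq

/-- `term 0` is the origin, since `1 / 0 = 0`. -/
noncomputable def term (k : ℕ) : HarmonicSeq :=
  ⟨1 / k, k.eq_zero_or_pos.imp (fun hk => by simp [hk]) fun hk => ⟨k, hk, rfl⟩⟩

theorem term_surjective : Function.Surjective term := by
  rintro ⟨x, rfl | ⟨k, -, rfl⟩⟩
  · exact ⟨0, Subtype.ext (by simp [term])⟩
  · exact ⟨k, rfl⟩

theorem dist_term (j k : ℕ) : dist (term j) (term k) = |1 / (j : ℝ) - 1 / k| := by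
  rw [Subtype.dist_eq, Real.dist_eq]
  rfl

theorem dist_term_zero (k : ℕ) : dist (term k) (term 0) = 1 / k := by
  rw [dist_term, Nat.cast_zero, div_zero, sub_zero, abs_of_nonneg (by positivity)]

theorem dist_term_succ {k : ℕ} (hk : 1 ≤ k) :
    dist (term k) (term (k + 1)) = 1 / (k * (k + 1)) := by
  have hk' : (1 : ℝ) ≤ k := by exact_mod_cast hk
  rw [dist_term, Nat.cast_succ, abs_of_nonneg (sub_nonneg.mpr (by gcongr; linarith))]
  field_simp
  ring

theorem one_div_mul_succ_le_dist_term {j k : ℕ} (hk : 1 ≤ k) (hne : j ≠ k) :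
    1 / (k * (k + 1) : ℝ) ≤ dist (term j) (term k) := by
  have hk' : (1 : ℝ) ≤ k := by exact_mod_cast hk
  rw [dist_term]
  rcases j.eq_zero_or_pos with rfl | hj
  · rw [← dist_term, dist_comm, dist_term_zero]
    gcongr
    nlinarith
  rcases lt_or_gt_of_ne hne with hjk | hjk
  · have hj' : (1 : ℝ) ≤ j := by exact_mod_cast hj
    have hjk' : (j : ℝ) + 1 ≤ k := by exact_mod_cast hjk
    refine le_trans ?_ (le_abs_self _)
    rw [div_sub_div _ _ (by positivity) (by positivity), div_le_div_iff₀ (by positivity)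
      (by positivity)]
    nlinarith [mul_le_mul_of_nonneg_right (by linarith : (1 : ℝ) ≤ k - j)
      (by positivity : (0 : ℝ) ≤ k * (k + 1))]
  · have hkj' : (k : ℝ) + 1 ≤ j := by exact_mod_cast hjk
    refine le_trans ?_ (neg_le_abs _)
    rw [neg_sub, div_sub_div _ _ (by positivity) (by positivity), div_le_div_iff₀ (by positivity)
      (by positivity)]
    nlinarith [mul_nonneg (sq_nonneg (k : ℝ)) (by linarith : (0 : ℝ) ≤ j - k - 1)]

theorem isOpen_singleton_of_ne_term_zero (x : HarmonicSeq) (hx : x ≠ term 0) :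
    IsOpen ({x} : Set HarmonicSeq) := by
  obtain ⟨k, rfl⟩ := term_surjective x
  have hk : 1 ≤ k := Nat.one_le_iff_ne_zero.mpr (by rintro rfl; exact hx rfl)
  refine isOpen_singleton_iff.mpr ⟨1 / (k * (k + 1)), by positivity, fun y hy => ?_⟩
  obtain ⟨j, rfl⟩ := term_surjective y
  by_contra hne
  exact (one_div_mul_succ_le_dist_term hk fun h => hne (h ▸ rfl)).not_gt hy

theorem reflTransGen_term_zero {K : ℕ} (hK : 1 ≤ K) :
    ReflTransGen (fun a b => dist a b ≤ 1 / (K * (K + 1))) (term K) (term 0) := by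
  have hKM : K ≤ K * (K + 1) := Nat.le_mul_of_pos_right K K.succ_pos
  refine Nat.decreasingInduction (motive := fun k _ => K ≤ k → ReflTransGen _ (term k) (term 0))
    (fun k _ ih hKk => .head ?_ (ih (hKk.trans k.le_succ))) ?_ hKM le_rfl
  · rw [dist_term_succ (hK.trans hKk)]
    have : (K : ℝ) ≤ k := by exact_mod_cast hKk
    gcongr
  · refine fun _ => .single (le_of_eq ?_)
    rw [dist_term_zero]
    push_cast
    rfl

theorem not_nagataProp_zero : ¬ NagataProp HarmonicSeq 0 := by
  intro h
  obtain ⟨c, hc, hchain⟩ := h.exists_dist_le_of_reflTransGen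
  obtain ⟨K, hcK⟩ := exists_nat_gt c
  have hK : (0 : ℝ) < K := hc.trans hcK
  have hdist := hchain _ (by positivity) _ _ (reflTransGen_term_zero (Nat.cast_pos.mp hK))
  rw [dist_term_zero, mul_one_div, div_le_div_iff₀ hK (by positivity)] at hdist
  nlinarith

end HarmonicSeq

theorem nagataDim_harmonic_sequence :
    nagataDim {x : ℝ // x = 0 ∨ ∃ k : ℕ, 1 ≤ k ∧ x = 1 / k} = 1 ∧
    covDim {x : ℝ // x = 0 ∨ ∃ k : ℕ, 1 ≤ k ∧ x = 1 / k} = 0 := by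
  refine ⟨le_antisymm ?_ ?_, covDim_eq_zero_of_forall_ne_isOpen_singleton _
    HarmonicSeq.isOpen_singleton_of_ne_term_zero⟩
  · exact_mod_cast nagataDim_le (nagataProp_real_one.of_isometry isometry_subtype_coe)
  · refine le_nagataDim fun m hm => ?_
    obtain rfl : m = 0 := by omega
    exact HarmonicSeq.not_nagataProp_zero
end

section
/- A metric space X satisfies dim_N X ≤ n if and only if there exists a constant c > 0 such that for every s > 0, X admits a covering of the form 𝓑 = 𝓑₀ ∪ … ∪ 𝓑ₙ by sets of diameter ≤ c·s, where each subfamily 𝓑ₖ has s-multiplicity at most 1 (any two distinct members of 𝓑ₖ are at distance > s). -/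
open Metric Set

/-!
A colored covering is a Nagata covering: a set of diameter `≤ s` meets at most one member of
each `s`-separated color class. Conversely, take a Nagata covering `𝓐` at scale `(4n+6)s` and,
for a point `x`, the members of `𝓐` meeting the balls `ball x ((2k+1)s)`, `k = 0, …, n+1`.
These `n+2` nested families lie in a set of at most `n+1` members, so for some `k ≤ n` the family
does not grow from radius `(2k+1)s` to `(2k+3)s`. Color `x` by such a `k` and assign to it a
member of its family. Two points of the same color at distance `≤ s` see the same family, hence
are assigned the same member, so within each color the fibres of the assignment are
`s`-separated.
-/

theorem NagataProp.mono {X : Type*} [MetricSpace X] {m n : ℕ} (h : NagataProp X m)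
    (hmn : m ≤ n) : NagataProp X n := by
  obtain ⟨c, hc, H⟩ := h
  refine ⟨c, hc, fun s hs => ?_⟩
  obtain ⟨𝓑, hcov, hdiam, hmul⟩ := H s hs
  refine ⟨𝓑, hcov, hdiam, fun E hE => ?_⟩
  obtain ⟨T, hT, hmem⟩ := hmul E hE
  exact ⟨T, hT.trans (by omega), hmem⟩

theorem nagataDim_le_iff_nagataProp {X : Type*} [MetricSpace X] {n : ℕ} :
    nagataDim X ≤ n ↔ NagataProp X n := by
  refine ⟨fun h => ?_, fun h => sInf_le ⟨n, rfl, h⟩⟩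
  have hne : {k : ℕ∞ | ∃ m : ℕ, k = m ∧ NagataProp X m}.Nonempty := by
    by_contra hempty
    simp [nagataDim, not_nonempty_iff_eq_empty.1 hempty] at h
  obtain ⟨m, hm, hmX⟩ := csInf_mem hne
  rw [nagataDim, hm, Nat.cast_le] at h
  exact hmX.mono h

def IsSeparatedFamily {X : Type*} [PseudoMetricSpace X] (s : ℝ) (𝓑 : Set (Set X)) : Prop :=
  ∀ B ∈ 𝓑, ∀ C ∈ 𝓑, B ≠ C → ∀ x ∈ B, ∀ y ∈ C, s < dist x y

def HasColoredCoverings (X : Type*) [MetricSpace X] (n : ℕ) : Prop :=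
  ∃ c : ℝ, 0 < c ∧ ∀ s : ℝ, 0 < s → ∃ 𝓑 : Fin (n + 1) → Set (Set X),
    (⋃₀ (⋃ k, 𝓑 k) = univ) ∧
    (∀ k, ∀ B ∈ 𝓑 k, ediam B ≤ ENNReal.ofReal (c * s)) ∧
    (∀ k, IsSeparatedFamily s (𝓑 k))

theorem IsSeparatedFamily.subsingleton_meeting {X : Type*} [PseudoMetricSpace X] {s : ℝ}
    {𝓑 : Set (Set X)} (h : IsSeparatedFamily s 𝓑) (hs : 0 ≤ s) {E : Set X}
    (hE : ediam E ≤ ENNReal.ofReal s) : {B ∈ 𝓑 | (B ∩ E).Nonempty}.Subsingleton := by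
  rintro B ⟨hB, x, hxB, hxE⟩ C ⟨hC, y, hyC, hyE⟩
  by_contra hBC
  have hxy : dist x y ≤ s := (edist_le_ofReal hs).1 (edist_le_of_ediam_le hxE hyE hE)
  exact (h B hB C hC hBC x hxB y hyC).not_ge hxy

theorem HasColoredCoverings.nagataProp {X : Type*} [MetricSpace X] {n : ℕ}
    (h : HasColoredCoverings X n) : NagataProp X n := by
  obtain ⟨c, hc, H⟩ := h
  refine ⟨c, hc, fun s hs => ?_⟩
  obtain ⟨𝓑, hcov, hdiam, hsep⟩ := H s hs
  refine ⟨⋃ k, 𝓑 k, hcov, fun B hB => ?_, fun E hE => ?_⟩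
  · obtain ⟨k, hk⟩ := mem_iUnion.1 hB
    exact hdiam k B hk
  let pick k := Classical.epsilon fun B => B ∈ 𝓑 k ∧ (B ∩ E).Nonempty
  refine ⟨Finset.univ.image pick, Finset.card_image_le.trans (by simp), fun B hB hBE => ?_⟩
  obtain ⟨k, hk⟩ := mem_iUnion.1 hB
  have hpick : pick k ∈ {B ∈ 𝓑 k | (B ∩ E).Nonempty} := Classical.epsilon_spec ⟨B, hk, hBE⟩
  rw [(hsep k).subsingleton_meeting hs.le hE ⟨hk, hBE⟩ hpick]
  exact Finset.mem_image_of_mem pick (Finset.mem_univ k)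

theorem exists_le_succ_subset_of_monotone {α : Type*} {F : ℕ → Set α} (hF : Monotone F)
    (h0 : (F 0).Nonempty) {n : ℕ} {T : Finset α} (hT : F (n + 1) ⊆ T) (hcard : T.card ≤ n + 1) :
    ∃ k ≤ n, F (k + 1) ⊆ F k := by
  by_contra! hgrow
  have hfin : ∀ k ≤ n + 1, (F k).Finite := fun k hk =>
    T.finite_toSet.subset ((hF hk).trans hT)
  have hsize : ∀ k ≤ n + 1, k + 1 ≤ (F k).ncard := by
    intro k hk
    induction k with
    | zero => exact (ncard_pos (hfin 0 hk)).2 h0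
    | succ k ih =>
      have hlt := ncard_lt_ncard
        ((hF (Nat.le_add_right k 1)).ssubset_of_not_subset (hgrow k (by omega))) (hfin _ hk)
      have := ih (by omega)
      omega
  have := (hsize (n + 1) le_rfl).trans (ncard_le_ncard hT T.finite_toSet)
  rw [ncard_coe_finset] at this
  omega

section nearMembers

variable {X : Type*} [PseudoMetricSpace X] {𝓐 : Set (Set X)}

theorem ediam_ball_le (x : X) (r : ℝ) : ediam (ball x r) ≤ ENNReal.ofReal (2 * r) :=
  ediam_le_of_forall_dist_le fun y hy z hz =>
    (dist_triangle_right y z x).trans (by linarith [mem_ball.1 hy, mem_ball.1 hz])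

def nearMembers (𝓐 : Set (Set X)) (x : X) (r : ℝ) : Set (Set X) :=
  {A ∈ 𝓐 | (A ∩ ball x r).Nonempty}

theorem nearMembers_mono (𝓐 : Set (Set X)) (x : X) : Monotone (nearMembers 𝓐 x) :=
  fun _ _ hr _ ⟨hA, hne⟩ => ⟨hA, hne.mono (inter_subset_inter_right _ (ball_subset_ball hr))⟩

theorem nearMembers_subset_of_dist_add_le {x y : X} {r r' : ℝ} (h : r + dist x y ≤ r') :
    nearMembers 𝓐 x r ⊆ nearMembers 𝓐 y r' :=
  fun _ ⟨hA, hne⟩ => ⟨hA, hne.mono (inter_subset_inter_right _ (ball_subset_ball' h))⟩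

theorem nearMembers_nonempty (hcov : ⋃₀ 𝓐 = univ) (x : X) {r : ℝ} (hr : 0 < r) :
    (nearMembers 𝓐 x r).Nonempty := by
  obtain ⟨A, hA, hxA⟩ := hcov.symm ▸ mem_univ x
  exact ⟨A, hA, x, hxA, mem_ball_self hr⟩

theorem exists_nearMembers_stable (hcov : ⋃₀ 𝓐 = univ) {ρ : ℕ → ℝ} (hρ : Monotone ρ)
    (hρ0 : 0 < ρ 0) (x : X) {n : ℕ} {T : Finset (Set X)}
    (hT : ∀ A ∈ 𝓐, (A ∩ ball x (ρ (n + 1))).Nonempty → A ∈ T) (hcard : T.card ≤ n + 1) :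
    ∃ k ≤ n, nearMembers 𝓐 x (ρ (k + 1)) ⊆ nearMembers 𝓐 x (ρ k) :=
  exists_le_succ_subset_of_monotone ((nearMembers_mono 𝓐 x).comp hρ)
    (nearMembers_nonempty hcov x hρ0) (fun A ⟨hA, hAx⟩ => hT A hA hAx) hcard

end nearMembers

section colorClasses

variable {X : Type*} (κ : X → ℕ) (φ : X → Set X)

def colorClasses (k : ℕ) : Set (Set X) :=
  range fun B => {x | κ x = k ∧ φ x = B}

variable {κ φ}

theorem sUnion_iUnion_colorClasses {n : ℕ} (hκ : ∀ x, κ x ≤ n) :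
    ⋃₀ ⋃ k : Fin (n + 1), colorClasses κ φ k = univ :=
  eq_univ_of_forall fun x =>
    ⟨_, mem_iUnion.2 ⟨⟨κ x, Nat.lt_succ_of_le (hκ x)⟩, φ x, rfl⟩, rfl, rfl⟩

theorem ediam_le_of_mem_colorClasses [PseudoMetricSpace X] {R D : ℝ}
    (hR : ∀ x, ∃ z ∈ φ x, dist z x ≤ R) (hD : ∀ x, ∀ z ∈ φ x, ∀ w ∈ φ x, dist z w ≤ D)
    {k : ℕ} {B : Set X} (hB : B ∈ colorClasses κ φ k) :
    ediam B ≤ ENNReal.ofReal (2 * R + D) := by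
  obtain ⟨A, rfl⟩ := hB
  refine ediam_le_of_forall_dist_le ?_
  rintro x ⟨-, rfl⟩ y ⟨-, hy⟩
  obtain ⟨z, hz, hzx⟩ := hR x
  obtain ⟨w, hw, hwy⟩ := hR y
  rw [hy] at hw
  calc dist x y ≤ dist x z + dist z w + dist w y := dist_triangle4 x z w y
    _ ≤ R + D + R := add_le_add (add_le_add (dist_comm x z ▸ hzx) (hD x z hz w hw)) hwy
    _ = 2 * R + D := by ring

theorem isSeparatedFamily_colorClasses [PseudoMetricSpace X] {s : ℝ}
    (h : ∀ x y, κ x = κ y → dist x y ≤ s → φ x = φ y) (k : ℕ) :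
    IsSeparatedFamily s (colorClasses κ φ k) := by
  rintro _ ⟨A, rfl⟩ _ ⟨A', rfl⟩ hne x ⟨hx, rfl⟩ y ⟨hy, rfl⟩
  by_contra! hxy
  exact hne (by rw [h x y (hx.trans hy.symm) hxy])

end colorClasses

theorem NagataProp.hasColoredCoverings {X : Type*} [MetricSpace X] {n : ℕ}
    (h : NagataProp X n) : HasColoredCoverings X n := by
  obtain ⟨c, hc, H⟩ := h
  refine ⟨c * (4 * n + 6) + 4 * n + 2, by positivity, fun s hs => ?_⟩
  obtain ⟨𝓐, hcov, hdiam, hmul⟩ := H ((4 * n + 6) * s) (by positivity)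
  let ρ : ℕ → ℝ := fun k => (2 * k + 1) * s
  have hρ : Monotone ρ := fun k l hkl => by simp only [ρ]; gcongr
  have hstable : ∀ x, ∃ k ≤ n, nearMembers 𝓐 x (ρ (k + 1)) ⊆ nearMembers 𝓐 x (ρ k) := by
    intro x
    have hball : ediam (ball x (ρ (n + 1))) ≤ ENNReal.ofReal ((4 * n + 6) * s) :=
      (ediam_ball_le x _).trans_eq (by simp only [ρ]; push_cast; ring_nf)
    obtain ⟨T, hTcard, hT⟩ := hmul _ hball
    exact exists_nearMembers_stable hcov hρ (by positivity) x hT hTcard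
  choose κ hκn hκ using hstable
  let φ x := Classical.epsilon (· ∈ nearMembers 𝓐 x (ρ (κ x)))
  have hφ x : φ x ∈ nearMembers 𝓐 x (ρ (κ x)) :=
    Classical.epsilon_spec (nearMembers_nonempty hcov x (by positivity))
  have hnear x y (hxy : κ x = κ y) (hd : dist x y ≤ s) :
      nearMembers 𝓐 x (ρ (κ x)) ⊆ nearMembers 𝓐 y (ρ (κ y)) := by
    have hgrow : ρ (κ x) + dist x y ≤ ρ (κ y + 1) := by
      rw [← hxy]; simp only [ρ]; push_cast; linarith
    exact (nearMembers_subset_of_dist_add_le hgrow).trans (hκ y)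
  have hφ_eq x y (hxy : κ x = κ y) (hd : dist x y ≤ s) : φ x = φ y := by
    simp only [φ, (hnear x y hxy hd).antisymm (hnear y x hxy.symm (dist_comm x y ▸ hd))]
  refine ⟨fun k => colorClasses κ φ k, sUnion_iUnion_colorClasses hκn, fun k B hB => ?_,
    fun k => isSeparatedFamily_colorClasses hφ_eq k⟩
  have hR x : ∃ z ∈ φ x, dist z x ≤ (2 * n + 1) * s := by
    obtain ⟨-, z, hz, hzx⟩ := hφ x
    refine ⟨z, hz, (mem_ball.1 hzx).le.trans ?_⟩
    simp only [ρ]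
    gcongr
    exact_mod_cast hκn x
  have hD x : ∀ z ∈ φ x, ∀ w ∈ φ x, dist z w ≤ c * ((4 * n + 6) * s) := fun z hz w hw =>
    (edist_le_ofReal (by positivity)).1 (edist_le_of_ediam_le hz hw (hdiam _ (hφ x).1))
  refine (ediam_le_of_mem_colorClasses hR hD hB).trans (ENNReal.ofReal_le_ofReal (le_of_eq ?_))
  ring

theorem nagataDim_le_iff_colored_covering {X : Type*} [MetricSpace X] (n : ℕ) :
    nagataDim X ≤ n ↔
      ∃ c : ℝ, 0 < c ∧ ∀ s : ℝ, 0 < s → ∃ 𝓑 : Fin (n + 1) → Set (Set X),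
        (⋃₀ (⋃ k, 𝓑 k) = univ) ∧
        (∀ k, ∀ B ∈ 𝓑 k, EMetric.diam B ≤ ENNReal.ofReal (c * s)) ∧
        (∀ k, ∀ B ∈ 𝓑 k, ∀ C ∈ 𝓑 k, B ≠ C → ∀ x ∈ B, ∀ y ∈ C, s < dist x y) :=
  nagataDim_le_iff_nagataProp.trans
    ⟨NagataProp.hasColoredCoverings, HasColoredCoverings.nagataProp⟩
end

section
/- For any two nonempty metric spaces X and X', the Nagata dimension of the product satisfies dim_N(X × X') ≤ dim_N X + dim_N X', where X × X' carries (for example) the sup metric. -/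
open Metric Set

/-!
A Nagata cover of `X` at scale `s`, with a partition of unity subordinate to it whose members
are stacked in a fixed well-order, gives for every `x` a tiling of `[0, 1)` by half-open
intervals `I_B(x)`, one per member `B`: at most `n + 1` are nonempty, one has length at least
`1 / (n + 1)`, the endpoints are `O(1 / s)`-Lipschitz in `x`, and `I_B(x)` is nonempty only
near `B`. For `X × Y` take the sets of points `(x, y)` where `I_B(x) ∩ I_C(y)` is long. They
cover, since a tile of length `1 / (n + 1)` at `x` contains `m + 2` evenly spaced points, two of
which lie in the same tile at `y`. Their multiplicity at a small scale is at most `n + m + 1`: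
near a point only pairs whose tiles meet at that point qualify, and two tilings of an interval
with `n + 1` and `m + 1` nonempty tiles have at most `n + m + 1` intersecting pairs, as many as
the tiles of their common refinement.
-/

open Function

lemma dist_le_of_mem_of_ediam_le {X : Type*} [PseudoMetricSpace X] {s : Set X} {x y : X} {r : ℝ}
    (hr : 0 ≤ r) (hx : x ∈ s) (hy : y ∈ s) (hs : ediam s ≤ ENNReal.ofReal r) : dist x y ≤ r := by
  rw [← ENNReal.ofReal_le_ofReal_iff hr, ← edist_dist]
  exact edist_le_of_ediam_le hx hy hs

lemma abs_div_sub_div_le {a a' F F' s : ℝ} (hs : 0 < s) (hF : s ≤ F) (hF' : s ≤ F')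
    (ha : 0 ≤ a) (haF : a ≤ F) :
    |a / F - a' / F'| ≤ (|a - a'| + |F - F'|) / s := by
  have hF₀ : 0 < F := hs.trans_le hF
  have hF₀' : 0 < F' := hs.trans_le hF'
  have hq : |a / F| ≤ 1 := by
    rw [abs_of_nonneg (div_nonneg ha hF₀.le)]
    exact div_le_one_of_le₀ haF hF₀.le
  have hnum : |a - a' + a / F * (F' - F)| ≤ |a - a'| + |F - F'| :=
    calc |a - a' + a / F * (F' - F)| ≤ |a - a'| + |a / F| * |F' - F| := by
          rw [← abs_mul]; exact abs_add_le _ _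
      _ ≤ |a - a'| + 1 * |F - F'| := by rw [abs_sub_comm F']; gcongr
      _ = |a - a'| + |F - F'| := by rw [one_mul]
  calc |a / F - a' / F'| = |a - a' + a / F * (F' - F)| / F' := by
        rw [← abs_of_pos hF₀', ← abs_div, abs_of_pos hF₀']
        congr 1
        field_simp
        ring
    _ ≤ (|a - a'| + |F - F'|) / s := div_le_div₀ (by positivity) hnum hs hF'

lemma Finset.exists_mem_Ico_sum_filter_lt_sum_filter_le {ι M : Type*} [LinearOrder ι]
    [AddCommMonoid M] [LinearOrder M] (w : ι → M) (S : Finset ι) {t : M} (ht₀ : 0 ≤ t)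
    (ht : t < ∑ i ∈ S, w i) :
    ∃ i ∈ S, t ∈ Set.Ico (∑ j ∈ S with j < i, w j) (∑ j ∈ S with j ≤ i, w j) := by
  classical
  induction S using Finset.induction_on_max with
  | empty => exact absurd (ht₀.trans_lt ht) (by simp)
  | insert a S ha ih =>
    have haS : a ∉ S := fun h => lt_irrefl a (ha a h)
    by_cases htS : t < ∑ i ∈ S, w i
    · obtain ⟨i, hi, hti⟩ := ih htS
      have hai : ¬a < i := (ha i hi).not_gt
      have hai' : ¬a ≤ i := (ha i hi).not_ge
      refine ⟨i, Finset.mem_insert_of_mem hi, ?_⟩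
      rwa [Finset.filter_insert, if_neg hai, Finset.filter_insert, if_neg hai']
    · have hlt : S.filter (· < a) = S := Finset.filter_true_of_mem ha
      have hle : (insert a S).filter (· ≤ a) = insert a S :=
        Finset.filter_true_of_mem fun j hj => by
          rcases Finset.mem_insert.1 hj with rfl | hj
          exacts [le_rfl, (ha j hj).le]
      refine ⟨a, Finset.mem_insert_self a S, ?_, ?_⟩
      · rw [Finset.filter_insert, if_neg (lt_irrefl a), hlt]
        exact not_lt.1 htS
      · rwa [hle]

lemma injOn_max_of_pairwise_disjoint_Ico {α β γ : Type*} [LinearOrder γ]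
    {l r : α → γ} {l' r' : β → γ}
    (hI : Pairwise (Disjoint on fun a => Ico (l a) (r a)))
    (hJ : Pairwise (Disjoint on fun b => Ico (l' b) (r' b))) :
    InjOn (fun q : α × β => max (l q.1) (l' q.2))
      {q | (Ico (l q.1) (r q.1) ∩ Ico (l' q.2) (r' q.2)).Nonempty} := by
  intro q hq q' hq' h
  simp only [mem_ofPred_eq, Ico_inter_Ico, nonempty_Ico] at hq hq' h
  have hmem : ∀ {a b}, max (l a) (l' b) < min (r a) (r' b) →
      max (l a) (l' b) ∈ Ico (l a) (r a) ∧ max (l a) (l' b) ∈ Ico (l' b) (r' b) := fun h => by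
    simpa [← mem_inter_iff, Ico_inter_Ico] using h
  obtain ⟨h₁, h₂⟩ := hmem hq
  obtain ⟨h₁', h₂'⟩ := hmem hq'
  rw [← h] at h₁' h₂'
  ext
  · by_contra hne
    exact Set.disjoint_left.1 (hI hne) h₁ h₁'
  · by_contra hne
    exact Set.disjoint_left.1 (hJ hne) h₂ h₂'

lemma card_le_card_add_card_sub_one_of_Ico_inter_nonempty {α β γ : Type*} [LinearOrder γ]
    {l r : α → γ} {l' r' : β → γ}
    (hI : Pairwise (Disjoint on fun a => Ico (l a) (r a)))
    (hJ : Pairwise (Disjoint on fun b => Ico (l' b) (r' b)))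
    {S : Finset α} {T : Finset β} {P : Finset (α × β)} (hPST : P ⊆ S ×ˢ T)
    (hP : ∀ q ∈ P, (Ico (l q.1) (r q.1) ∩ Ico (l' q.2) (r' q.2)).Nonempty) :
    P.card ≤ S.card + T.card - 1 := by
  classical
  rcases P.eq_empty_or_nonempty with rfl | hPne
  · simp
  let start : α × β → γ := fun q => max (l q.1) (l' q.2)
  have hstart_inj : ∀ q ∈ P, ∀ q' ∈ P, start q = start q' → q = q' := fun q hq q' hq' =>
    injOn_max_of_pairwise_disjoint_Ico hI hJ (hP q hq) (hP q' hq')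
  -- Sending a pair to the factor whose tile starts where their intersection does is injective,
  -- and misses the other factor of the pair whose intersection starts leftmost.
  let late : α × β → α ⊕ β := fun q => if l' q.2 ≤ l q.1 then .inl q.1 else .inr q.2
  let early : α × β → α ⊕ β := fun q => if l' q.2 ≤ l q.1 then .inr q.2 else .inl q.1
  let lft : α ⊕ β → γ := Sum.elim l l'
  have hlate : ∀ q, lft (late q) = start q := by
    intro q
    by_cases h : l' q.2 ≤ l q.1
    · simp [lft, late, start, h]
    · simp [lft, late, start, h, (not_le.1 h).le]
  have hearly : ∀ q, lft (early q) ≤ start q := by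
    intro q
    by_cases h : l' q.2 ≤ l q.1 <;> simp [lft, early, start, h]
  have hlate_ne : ∀ q, late q ≠ early q := by
    intro q
    by_cases h : l' q.2 ≤ l q.1 <;> simp [late, early, h]
  have hmem : ∀ q ∈ P, late q ∈ S.disjSum T ∧ early q ∈ S.disjSum T := by
    intro q hq
    obtain ⟨h₁, h₂⟩ := Finset.mem_product.1 (hPST hq)
    by_cases h : l' q.2 ≤ l q.1 <;> simp [late, early, h, h₁, h₂]
  obtain ⟨q₀, hq₀, hmin⟩ := P.exists_min_image start hPne
  have hmaps : ∀ q ∈ P, late q ∈ (S.disjSum T).erase (early q₀) := by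
    intro q hq
    refine Finset.mem_erase.2 ⟨fun h => ?_, (hmem q hq).1⟩
    have : start q = start q₀ :=
      le_antisymm (by rw [← hlate, h]; exact hearly q₀) (hmin q hq)
    rw [hstart_inj q hq q₀ hq₀ this] at h
    exact hlate_ne q₀ h
  calc P.card ≤ ((S.disjSum T).erase (early q₀)).card :=
        Finset.card_le_card_of_injOn late (fun q hq => hmaps q hq) fun q hq q' hq' h =>
          hstart_inj q hq q' hq' (by rw [← hlate, ← hlate, h])
    _ = S.card + T.card - 1 := by
        rw [Finset.card_erase_of_mem (hmem q₀ hq₀).2, Finset.card_disjSum]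

lemma finsum_mem_eq_sum_filter_of_support_subset {ι M : Type*} [AddCommMonoid M] {g : ι → M}
    {T : Finset ι} (h : support g ⊆ T) (J : Set ι) [DecidablePred (· ∈ J)] :
    ∑ᶠ j ∈ J, g j = ∑ j ∈ T with j ∈ J, g j :=
  finsum_mem_eq_sum_of_inter_support_eq g <| by
    ext j
    simp only [mem_inter_iff, Finset.coe_filter, mem_ofPred_eq]
    exact ⟨fun ⟨hJ, hj⟩ => ⟨⟨h hj, hJ⟩, hj⟩, fun ⟨⟨_, hJ⟩, hj⟩ => ⟨hJ, hj⟩⟩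

structure IntervalTiling (X ι : Type*) [PseudoMetricSpace X] (n : ℕ) (K D : ℝ) where
  left : ι → X → ℝ
  right : ι → X → ℝ
  nonneg_left : ∀ i x, 0 ≤ left i x
  right_le_one : ∀ i x, right i x ≤ 1
  pairwise_disjoint : ∀ x, Pairwise (Disjoint on fun i => Ico (left i x) (right i x))
  exists_mem_Ico : ∀ x, ∀ t ∈ Ico (0 : ℝ) 1, ∃ i, t ∈ Ico (left i x) (right i x)
  exists_finset : ∀ x, ∃ T : Finset ι, T.card ≤ n + 1 ∧ ∀ i, left i x < right i x → i ∈ T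
  exists_le_sub : ∀ x, ∃ i, 1 / (n + 1) ≤ right i x - left i x
  abs_left_sub_le : ∀ i x y, |left i x - left i y| ≤ K * dist x y
  abs_right_sub_le : ∀ i x y, |right i x - right i y| ≤ K * dist x y
  dist_le : ∀ i x y, left i x < right i x → left i y < right i y → dist x y ≤ D

section BumpFamily

variable {X ι : Type*} [PseudoMetricSpace X]

structure IsBumpFamily (f : ι → X → ℝ) (n : ℕ) (s D : ℝ) : Prop where
  nonneg : ∀ i x, 0 ≤ f i x
  lipschitzWith : ∀ i, LipschitzWith 1 (f i)
  exists_le : ∀ x, ∃ i, s ≤ f i x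
  exists_support_subset : ∀ x, ∃ T : Finset ι, T.card ≤ n + 1 ∧ support (f · x) ⊆ T
  dist_le : ∀ i x y, 0 < f i x → 0 < f i y → dist x y ≤ D

noncomputable def massFraction (f : ι → X → ℝ) (J : Set ι) (x : X) : ℝ :=
  (∑ᶠ j ∈ J, f j x) / ∑ᶠ j, f j x

namespace IsBumpFamily

variable {f : ι → X → ℝ} {n : ℕ} {s D : ℝ}

lemma abs_finsum_mem_sub_le (hf : IsBumpFamily f n s D) (J : Set ι) (x y : X) :
    |∑ᶠ j ∈ J, f j x - ∑ᶠ j ∈ J, f j y| ≤ 2 * (n + 1) * dist x y := by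
  classical
  obtain ⟨Tx, hTx, hx⟩ := hf.exists_support_subset x
  obtain ⟨Ty, hTy, hy⟩ := hf.exists_support_subset y
  have hV : (Tx ∪ Ty).card ≤ 2 * (n + 1) := by
    have := Finset.card_union_le Tx Ty
    omega
  rw [finsum_mem_eq_sum_filter_of_support_subset
      (hx.trans (Finset.coe_subset.2 Finset.subset_union_left)) J,
    finsum_mem_eq_sum_filter_of_support_subset
      (hy.trans (Finset.coe_subset.2 Finset.subset_union_right)) J,
    ← Finset.sum_sub_distrib]
  calc |∑ j ∈ Tx ∪ Ty with j ∈ J, (f j x - f j y)|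
      ≤ ∑ j ∈ Tx ∪ Ty with j ∈ J, |f j x - f j y| := Finset.abs_sum_le_sum_abs _ _
    _ ≤ ∑ j ∈ Tx ∪ Ty with j ∈ J, dist x y := Finset.sum_le_sum fun j _ => by
        simpa [Real.dist_eq] using (hf.lipschitzWith j).dist_le_mul x y
    _ ≤ (Tx ∪ Ty).card * dist x y := by
        rw [Finset.sum_const, nsmul_eq_mul]
        gcongr
        exact Finset.filter_subset _ _
    _ ≤ 2 * (n + 1) * dist x y := by
        gcongr
        exact_mod_cast hV

lemma finsum_mem_mono (hf : IsBumpFamily f n s D) {J J' : Set ι} (h : J ⊆ J') (x : X) :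
    ∑ᶠ j ∈ J, f j x ≤ ∑ᶠ j ∈ J', f j x := by
  classical
  obtain ⟨T, -, hT⟩ := hf.exists_support_subset x
  rw [finsum_mem_eq_sum_filter_of_support_subset hT J,
    finsum_mem_eq_sum_filter_of_support_subset hT J']
  exact Finset.sum_le_sum_of_subset_of_nonneg (Finset.monotone_filter_right _ fun j _ hj => h hj)
    fun j _ _ => hf.nonneg j x

lemma le_finsum (hf : IsBumpFamily f n s D) (x : X) : s ≤ ∑ᶠ j, f j x := by
  obtain ⟨i, hi⟩ := hf.exists_le x
  obtain ⟨T, -, hT⟩ := hf.exists_support_subset x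
  exact hi.trans (single_le_finsum i (T.finite_toSet.subset hT) fun j => hf.nonneg j x)

lemma massFraction_nonneg (hf : IsBumpFamily f n s D) (J : Set ι) (x : X) :
    0 ≤ massFraction f J x :=
  div_nonneg (finsum_nonneg fun j => finsum_nonneg fun _ => hf.nonneg j x)
    (finsum_nonneg fun j => hf.nonneg j x)

lemma massFraction_mono (hf : IsBumpFamily f n s D) {J J' : Set ι} (h : J ⊆ J') (x : X) :
    massFraction f J x ≤ massFraction f J' x :=
  div_le_div_of_nonneg_right (hf.finsum_mem_mono h x) (finsum_nonneg fun j => hf.nonneg j x)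

lemma massFraction_le_one (hf : IsBumpFamily f n s D) (J : Set ι) (x : X) :
    massFraction f J x ≤ 1 := by
  refine div_le_one_of_le₀ ?_ (finsum_nonneg fun j => hf.nonneg j x)
  simpa only [finsum_mem_univ] using hf.finsum_mem_mono (subset_univ J) x

lemma abs_massFraction_sub_le (hf : IsBumpFamily f n s D) (hs : 0 < s) (J : Set ι) (x y : X) :
    |massFraction f J x - massFraction f J y| ≤ 4 * (n + 1) / s * dist x y := by
  have htotal := hf.abs_finsum_mem_sub_le univ x y
  simp only [finsum_mem_univ] at htotal
  calc |massFraction f J x - massFraction f J y|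
      ≤ (|∑ᶠ j ∈ J, f j x - ∑ᶠ j ∈ J, f j y| + |∑ᶠ j, f j x - ∑ᶠ j, f j y|) / s :=
        abs_div_sub_div_le hs (hf.le_finsum x) (hf.le_finsum y)
          (finsum_nonneg fun j => finsum_nonneg fun _ => hf.nonneg j x)
          (by simpa only [finsum_mem_univ] using hf.finsum_mem_mono (subset_univ J) x)
    _ ≤ (2 * (n + 1) * dist x y + 2 * (n + 1) * dist x y) / s := by
        gcongr
        exact hf.abs_finsum_mem_sub_le J x y
    _ = 4 * (n + 1) / s * dist x y := by ring

variable [LinearOrder ι]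

lemma massFraction_Iic_sub_Iio (hf : IsBumpFamily f n s D) (i : ι) (x : X) :
    massFraction f (Iic i) x - massFraction f (Iio i) x = f i x / ∑ᶠ j, f j x := by
  obtain ⟨T, -, hT⟩ := hf.exists_support_subset x
  have hfin : (Iio i ∩ support (f · x)).Finite :=
    T.finite_toSet.subset (inter_subset_right.trans hT)
  rw [massFraction, massFraction, div_sub_div_same, ← Iio_insert,
    finsum_mem_insert' _ self_notMem_Iio hfin, add_sub_cancel_right]

lemma massFraction_Iio_lt_Iic_iff (hf : IsBumpFamily f n s D) (hs : 0 < s) (i : ι) (x : X) :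
    massFraction f (Iio i) x < massFraction f (Iic i) x ↔ 0 < f i x := by
  rw [← sub_pos, hf.massFraction_Iic_sub_Iio]
  exact div_pos_iff_of_pos_right (hs.trans_le (hf.le_finsum x))

lemma exists_mem_Ico_massFraction (hf : IsBumpFamily f n s D) (hs : 0 < s) (x : X) :
    ∀ t ∈ Ico (0 : ℝ) 1, ∃ i, t ∈ Ico (massFraction f (Iio i) x) (massFraction f (Iic i) x) := by
  classical
  rintro t ⟨ht₀, ht₁⟩
  obtain ⟨T, -, hT⟩ := hf.exists_support_subset x
  have hF : 0 < ∑ᶠ j, f j x := hs.trans_le (hf.le_finsum x)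
  have hsum : ∑ᶠ j, f j x = ∑ j ∈ T, f j x := finsum_eq_sum_of_support_subset _ hT
  obtain ⟨i, -, h₁, h₂⟩ := Finset.exists_mem_Ico_sum_filter_lt_sum_filter_le (f · x) T
    (mul_nonneg ht₀ hF.le) (by rw [← hsum]; exact mul_lt_of_lt_one_left hF ht₁)
  refine ⟨i, ?_, ?_⟩
  · rw [massFraction, div_le_iff₀ hF, finsum_mem_eq_sum_filter_of_support_subset hT]
    simpa only [mem_Iio] using h₁
  · rw [massFraction, lt_div_iff₀ hF, finsum_mem_eq_sum_filter_of_support_subset hT]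
    simpa only [mem_Iic] using h₂

lemma exists_le_massFraction_sub (hf : IsBumpFamily f n s D) (hs : 0 < s) (x : X) :
    ∃ i, 1 / (n + 1) ≤ massFraction f (Iic i) x - massFraction f (Iio i) x := by
  obtain ⟨T, hTcard, hT⟩ := hf.exists_support_subset x
  obtain ⟨i₀, hi₀⟩ := hf.exists_le x
  have hTne : T.Nonempty := ⟨i₀, hT (hs.trans_le hi₀).ne'⟩
  obtain ⟨i, -, hmax⟩ := T.exists_max_image (f · x) hTne
  have hF : 0 < ∑ᶠ j, f j x := hs.trans_le (hf.le_finsum x)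
  have hFle : ∑ᶠ j, f j x ≤ (n + 1) * f i x :=
    calc ∑ᶠ j, f j x = ∑ j ∈ T, f j x := finsum_eq_sum_of_support_subset _ hT
      _ ≤ T.card • f i x := Finset.sum_le_card_nsmul _ _ _ hmax
      _ ≤ (n + 1) * f i x := by
          rw [nsmul_eq_mul]
          gcongr
          · exact hf.nonneg i x
          · exact_mod_cast hTcard
  refine ⟨i, ?_⟩
  rw [hf.massFraction_Iic_sub_Iio, div_le_div_iff₀ (by positivity) hF]
  linarith

noncomputable def intervalTiling (hf : IsBumpFamily f n s D) (hs : 0 < s) :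
    IntervalTiling X ι n (4 * (n + 1) / s) D where
  left i := massFraction f (Iio i)
  right i := massFraction f (Iic i)
  nonneg_left i := hf.massFraction_nonneg _
  right_le_one i := hf.massFraction_le_one _
  pairwise_disjoint x := (pairwise_disjoint_on _).2 fun i i' hii' =>
    Ico_disjoint_Ico.2 <| (min_le_left _ _).trans <|
      (hf.massFraction_mono (Iic_subset_Iio.2 hii') x).trans (le_max_right _ _)
  exists_mem_Ico := hf.exists_mem_Ico_massFraction hs
  exists_finset x := by
    obtain ⟨T, hTcard, hT⟩ := hf.exists_support_subset x
    exact ⟨T, hTcard, fun i hi => hT ((hf.massFraction_Iio_lt_Iic_iff hs i x).1 hi).ne'⟩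
  exists_le_sub := hf.exists_le_massFraction_sub hs
  abs_left_sub_le i := hf.abs_massFraction_sub_le hs _
  abs_right_sub_le i := hf.abs_massFraction_sub_le hs _
  dist_le i x y hx hy := hf.dist_le i x y ((hf.massFraction_Iio_lt_Iic_iff hs i x).1 hx)
    ((hf.massFraction_Iio_lt_Iic_iff hs i y).1 hy)

end IsBumpFamily

end BumpFamily

section NagataBump

variable {X : Type*} [PseudoMetricSpace X] (𝓑 : Set (Set X)) (s : ℝ)

open Classical in
/-- Empty members are excluded since `infDist x ∅ = 0`. -/
noncomputable def nagataBump (B : Set X) (x : X) : ℝ :=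
  if B ∈ 𝓑 ∧ B.Nonempty then max (s - infDist x B) 0 else 0

variable {𝓑 s}

lemma nagataBump_nonneg (B : Set X) (x : X) : 0 ≤ nagataBump 𝓑 s B x := by
  unfold nagataBump
  split_ifs
  exacts [le_max_right _ _, le_rfl]

lemma lipschitzWith_nagataBump (B : Set X) : LipschitzWith 1 (nagataBump 𝓑 s B) := by
  unfold nagataBump
  split_ifs
  · simpa using ((LipschitzWith.const s).sub (lipschitz_infDist_pt B)).max_const 0
  · exact (LipschitzWith.const 0).weaken zero_le_one

lemma nagataBump_of_mem (hs : 0 ≤ s) {B : Set X} (hB : B ∈ 𝓑) {x : X} (hx : x ∈ B) :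
    nagataBump 𝓑 s B x = s := by
  simp [nagataBump, hB, show B.Nonempty from ⟨x, hx⟩, infDist_zero_of_mem hx, hs]

lemma exists_dist_lt_of_nagataBump_pos {B : Set X} {x : X} (h : 0 < nagataBump 𝓑 s B x) :
    B ∈ 𝓑 ∧ ∃ b ∈ B, dist x b < s := by
  unfold nagataBump at h
  split_ifs at h with hB
  · rw [lt_max_iff, sub_pos] at h
    exact ⟨hB.1, (infDist_lt_iff hB.2).1 (h.resolve_right (lt_irrefl 0))⟩
  · exact absurd h (lt_irrefl 0)

end NagataBump

theorem NagataProp.exists_isBumpFamily {X : Type*} [MetricSpace X] {n : ℕ} (h : NagataProp X n) :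
    ∃ c > 0, ∀ s > 0, ∃ f : Set X → X → ℝ, IsBumpFamily f n s (c * s) := by
  obtain ⟨c, hc, H⟩ := h
  refine ⟨2 * c + 2, by positivity, fun s hs => ?_⟩
  obtain ⟨𝓑, hcover, hdiam, hmult⟩ := H (2 * s) (by positivity)
  refine ⟨nagataBump 𝓑 s, ⟨nagataBump_nonneg, lipschitzWith_nagataBump, fun x => ?_, fun x => ?_,
    fun B x y hx hy => ?_⟩⟩
  · obtain ⟨B, hB, hxB⟩ := sUnion_eq_univ_iff.1 hcover x
    exact ⟨B, (nagataBump_of_mem hs.le hB hxB).ge⟩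
  · have hball : ediam (closedBall x s) ≤ ENNReal.ofReal (2 * s) :=
      ediam_le_of_forall_dist_le fun a ha b hb => by
        linarith [dist_triangle_right a b x, mem_closedBall.1 ha, mem_closedBall.1 hb]
    obtain ⟨T, hT, hTmem⟩ := hmult _ hball
    refine ⟨T, hT, fun B hB => ?_⟩
    obtain ⟨h𝓑, b, hb, hxb⟩ :=
      exists_dist_lt_of_nagataBump_pos ((nagataBump_nonneg B x).lt_of_ne' hB)
    exact hTmem B h𝓑 ⟨b, hb, mem_closedBall.2 (by rw [dist_comm]; exact hxb.le)⟩
  · obtain ⟨h𝓑, b, hb, hxb⟩ := exists_dist_lt_of_nagataBump_pos hx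
    obtain ⟨-, b', hb', hyb'⟩ := exists_dist_lt_of_nagataBump_pos hy
    have hbb' := dist_le_of_mem_of_ediam_le (by positivity) hb hb' (hdiam B h𝓑)
    calc dist x y ≤ dist x b + dist b b' + dist b' y := dist_triangle4 _ _ _ _
      _ ≤ (2 * c + 2) * s := by rw [dist_comm b' y]; linarith

theorem NagataProp.exists_intervalTiling {X : Type*} [MetricSpace X] {n : ℕ}
    (h : NagataProp X n) :
    ∃ c > 0, ∀ s > 0, Nonempty (IntervalTiling X (Set X) n (4 * (n + 1) / s) (c * s)) := by
  obtain ⟨c, hc, hf⟩ := h.exists_isBumpFamily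
  refine ⟨c, hc, fun s hs => ?_⟩
  obtain ⟨f, hf⟩ := hf s hs
  let _ := IsWellOrder.linearOrder (WellOrderingRel (α := Set X))
  exact ⟨hf.intervalTiling hs⟩

namespace IntervalTiling

variable {X Y ι κ : Type*} [PseudoMetricSpace X] [PseudoMetricSpace Y] {n m : ℕ} {K K' D D' : ℝ}

lemma exists_lt_min_sub_max (t : IntervalTiling Y κ m K D) (y : Y) {a b : ℝ} (ha : 0 ≤ a)
    (hab : a < b) (hb : b ≤ 1) :
    ∃ j, (b - a) / (m + 2) < min b (t.right j y) - max a (t.left j y) := by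
  set u := (b - a) / (m + 2) with hu_def
  have hu : 0 < u := div_pos (sub_pos.2 hab) (by positivity)
  have hbu : a + (m + 2) * u = b := by rw [hu_def]; field_simp; ring
  let pt : Fin (m + 2) → ℝ := fun k => a + (k : ℕ) * u
  have hpt : ∀ k, a ≤ pt k ∧ pt k < b := by
    intro k
    have hk : ((k : ℕ) : ℝ) + 1 ≤ m + 2 := by exact_mod_cast k.isLt
    constructor <;> nlinarith
  choose g hg using fun k =>
    t.exists_mem_Ico y (pt k) ⟨ha.trans (hpt k).1, (hpt k).2.trans_le hb⟩
  obtain ⟨T, hT, hTmem⟩ := t.exists_finset y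
  obtain ⟨k, -, k', -, hkk', hg_eq⟩ := Finset.exists_ne_map_eq_of_card_lt_of_maps_to
    (t := T) (s := Finset.univ) (f := g) (by simp; omega)
    fun k _ => hTmem (g k) ((hg k).1.trans_lt (hg k).2)
  have key : ∀ k k' : Fin (m + 2), k < k' → g k = g k' →
      u < min b (t.right (g k) y) - max a (t.left (g k) y) := by
    intro k k' hlt heq
    have hk : ((k : ℕ) : ℝ) + 1 ≤ (k' : ℕ) := by exact_mod_cast hlt
    have hgap : pt k + u ≤ pt k' := by simp only [pt]; nlinarith
    have h₁ : pt k' < min b (t.right (g k) y) := lt_min (hpt k').2 (heq ▸ (hg k').2)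
    have h₂ : max a (t.left (g k) y) ≤ pt k := max_le (hpt k).1 (hg k).1
    linarith
  rcases lt_or_gt_of_ne hkk' with h | h
  · exact ⟨g k, key k k' h hg_eq⟩
  · exact ⟨g k', key k' k h hg_eq.symm⟩

def overlap (tX : IntervalTiling X ι n K D) (tY : IntervalTiling Y κ m K' D') (i : ι) (j : κ)
    (p : X × Y) : ℝ :=
  min (tX.right i p.1) (tY.right j p.2) - max (tX.left i p.1) (tY.left j p.2)

lemma overlap_pos_iff {tX : IntervalTiling X ι n K D} {tY : IntervalTiling Y κ m K' D'}
    {i : ι} {j : κ} {p : X × Y} :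
    0 < overlap tX tY i j p ↔
      (Ico (tX.left i p.1) (tX.right i p.1) ∩ Ico (tY.left j p.2) (tY.right j p.2)).Nonempty := by
  rw [Ico_inter_Ico, nonempty_Ico, overlap, sub_pos]

lemma left_lt_right_fst_of_overlap_pos {tX : IntervalTiling X ι n K D}
    {tY : IntervalTiling Y κ m K' D'} {i : ι} {j : κ} {p : X × Y}
    (h : 0 < overlap tX tY i j p) : tX.left i p.1 < tX.right i p.1 :=
  (overlap_pos_iff.1 h).mono inter_subset_left |> nonempty_Ico.1

lemma left_lt_right_snd_of_overlap_pos {tX : IntervalTiling X ι n K D}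
    {tY : IntervalTiling Y κ m K' D'} {i : ι} {j : κ} {p : X × Y}
    (h : 0 < overlap tX tY i j p) : tY.left j p.2 < tY.right j p.2 :=
  (overlap_pos_iff.1 h).mono inter_subset_right |> nonempty_Ico.1

lemma abs_overlap_sub_le (tX : IntervalTiling X ι n K D) (tY : IntervalTiling Y κ m K' D')
    (hK : 0 ≤ K) (hK' : 0 ≤ K') (i : ι) (j : κ) (p q : X × Y) :
    |overlap tX tY i j p - overlap tX tY i j q| ≤ 2 * (K + K') * dist p q := by
  have h₁ : dist p.1 q.1 ≤ dist p q := by rw [Prod.dist_eq]; exact le_max_left _ _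
  have h₂ : dist p.2 q.2 ≤ dist p q := by rw [Prod.dist_eq]; exact le_max_right _ _
  have hd := dist_nonneg (x := p) (y := q)
  have hmax : ∀ a b : ℝ, |a| ≤ K * dist p.1 q.1 → |b| ≤ K' * dist p.2 q.2 →
      max |a| |b| ≤ (K + K') * dist p q := fun a b ha hb =>
    max_le (by nlinarith) (by nlinarith)
  calc |overlap tX tY i j p - overlap tX tY i j q|
      ≤ |min (tX.right i p.1) (tY.right j p.2) - min (tX.right i q.1) (tY.right j q.2)| +
          |max (tX.left i p.1) (tY.left j p.2) - max (tX.left i q.1) (tY.left j q.2)| := by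
        refine le_of_eq_of_le ?_ (abs_sub _ _)
        rw [overlap, overlap]
        ring_nf
    _ ≤ (K + K') * dist p q + (K + K') * dist p q := by
        gcongr
        · exact (abs_min_sub_min_le_max _ _ _ _).trans
            (hmax _ _ (tX.abs_right_sub_le i _ _) (tY.abs_right_sub_le j _ _))
        · exact (abs_max_sub_max_le_max _ _ _ _).trans
            (hmax _ _ (tX.abs_left_sub_le i _ _) (tY.abs_left_sub_le j _ _))
    _ = 2 * (K + K') * dist p q := by ring

lemma exists_overlap_gt (tX : IntervalTiling X ι n K D) (tY : IntervalTiling Y κ m K' D')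
    (p : X × Y) :
    ∃ i j, 1 / ((n + 1) * (m + 2)) < overlap tX tY i j p := by
  obtain ⟨i, hi⟩ := tX.exists_le_sub p.1
  have hpos : (0 : ℝ) < 1 / (n + 1) := by positivity
  obtain ⟨j, hj⟩ := tY.exists_lt_min_sub_max p.2 (tX.nonneg_left i p.1) (by linarith)
    (tX.right_le_one i p.1)
  refine ⟨i, j, lt_of_le_of_lt ?_ hj⟩
  rw [← div_div]
  gcongr

lemma exists_finset_overlap_pos (tX : IntervalTiling X ι n K D)
    (tY : IntervalTiling Y κ m K' D') (p : X × Y) :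
    ∃ P : Finset (ι × κ), P.card ≤ n + m + 1 ∧ ∀ i j, 0 < overlap tX tY i j p → (i, j) ∈ P := by
  classical
  obtain ⟨TX, hTX, hTXmem⟩ := tX.exists_finset p.1
  obtain ⟨TY, hTY, hTYmem⟩ := tY.exists_finset p.2
  refine ⟨(TX ×ˢ TY).filter fun q => 0 < overlap tX tY q.1 q.2 p, ?_, fun i j h => ?_⟩
  · calc _ ≤ TX.card + TY.card - 1 :=
          card_le_card_add_card_sub_one_of_Ico_inter_nonempty (tX.pairwise_disjoint p.1)
            (tY.pairwise_disjoint p.2) (Finset.filter_subset _ _)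
            fun q hq => overlap_pos_iff.1 (Finset.mem_filter.1 hq).2
      _ ≤ n + m + 1 := by omega
  · refine Finset.mem_filter.2 ⟨Finset.mem_product.2 ⟨?_, ?_⟩, h⟩
    exacts [hTXmem i (left_lt_right_fst_of_overlap_pos h),
      hTYmem j (left_lt_right_snd_of_overlap_pos h)]

theorem exists_prod_cover (tX : IntervalTiling X ι n K D)
    (tY : IntervalTiling Y κ m K' D') (hK : 0 ≤ K) (hK' : 0 ≤ K') {σ : ℝ} (hσ : 0 ≤ σ)
    (hσK : (K + K') * σ ≤ 1 / (4 * ((n + 1) * (m + 2)))) :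
    ∃ 𝓖 : Set (Set (X × Y)), ⋃₀ 𝓖 = univ ∧
      (∀ W ∈ 𝓖, ediam W ≤ ENNReal.ofReal (max D D')) ∧
      ∀ E : Set (X × Y), ediam E ≤ ENNReal.ofReal σ →
        ∃ T : Finset (Set (X × Y)), T.card ≤ n + m + 1 ∧ ∀ W ∈ 𝓖, (W ∩ E).Nonempty → W ∈ T := by
  classical
  set θ : ℝ := 1 / ((n + 1) * (m + 2)) / 2 with hθ
  let G : ι × κ → Set (X × Y) := fun q => {p | θ < overlap tX tY q.1 q.2 p}
  have hG_pos : ∀ q p, p ∈ G q → 0 < overlap tX tY q.1 q.2 p := fun q p hp =>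
    lt_trans (by positivity) hp
  refine ⟨range G, sUnion_eq_univ_iff.2 fun p => ?_, ?_, fun E hE => ?_⟩
  · obtain ⟨i, j, h⟩ := exists_overlap_gt tX tY p
    exact ⟨G (i, j), mem_range_self _, lt_trans (half_lt_self (by positivity)) h⟩
  · rintro _ ⟨q, rfl⟩
    refine ediam_le_of_forall_dist_le fun p hp p' hp' => ?_
    rw [Prod.dist_eq]
    exact max_le_max
      (tX.dist_le _ _ _ (left_lt_right_fst_of_overlap_pos (hG_pos q p hp))
        (left_lt_right_fst_of_overlap_pos (hG_pos q p' hp')))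
      (tY.dist_le _ _ _ (left_lt_right_snd_of_overlap_pos (hG_pos q p hp))
        (left_lt_right_snd_of_overlap_pos (hG_pos q p' hp')))
  rcases E.eq_empty_or_nonempty with rfl | ⟨p₀, hp₀⟩
  · exact ⟨∅, by simp, by simp⟩
  obtain ⟨P, hP, hPmem⟩ := exists_finset_overlap_pos tX tY p₀
  refine ⟨P.image G, Finset.card_image_le.trans hP, ?_⟩
  rintro _ ⟨q, rfl⟩ ⟨p, hpG, hpE⟩
  have hpp₀ : dist p p₀ ≤ σ := dist_le_of_mem_of_ediam_le hσ hpE hp₀ hE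
  have hθσ : 2 * (K + K') * dist p p₀ ≤ θ :=
    calc 2 * (K + K') * dist p p₀ ≤ 2 * (K + K') * σ := by gcongr
      _ ≤ 2 * (1 / (4 * ((n + 1) * (m + 2)))) := by linarith
      _ = θ := by rw [hθ]; field_simp; ring
  have hpG' : θ < overlap tX tY q.1 q.2 p := hpG
  have hshift := abs_le.1 (abs_overlap_sub_le tX tY hK hK' q.1 q.2 p p₀)
  exact Finset.mem_image_of_mem G (hPmem q.1 q.2 (by linarith))

end IntervalTiling

theorem NagataProp.prod {X Y : Type*} [MetricSpace X] [MetricSpace Y] {n m : ℕ}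
    (hX : NagataProp X n) (hY : NagataProp Y m) : NagataProp (X × Y) (n + m) := by
  obtain ⟨c, hc, tX⟩ := hX.exists_intervalTiling
  obtain ⟨c', hc', tY⟩ := hY.exists_intervalTiling
  -- makes `(4 (n + 1) / (Λ σ) + 4 (m + 1) / (Λ σ)) σ = 1 / (4 (n + 1) (m + 2))`
  set Λ : ℝ := 16 * (n + m + 2) * ((n + 1) * (m + 2)) with hΛ
  refine ⟨max c c' * Λ, by positivity, fun σ hσ => ?_⟩
  have hs : 0 < Λ * σ := by positivity
  obtain ⟨𝓖, hcover, hdiam, hmult⟩ :=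
    IntervalTiling.exists_prod_cover (tX _ hs).some (tY _ hs).some (by positivity)
      (by positivity) hσ.le (le_of_eq (by rw [hΛ]; field_simp; ring))
  refine ⟨𝓖, hcover, fun W hW => (hdiam W hW).trans (le_of_eq ?_), hmult⟩
  rw [← max_mul_of_nonneg _ _ hs.le, mul_assoc (max c c')]

lemma nagataDim_le_of_nagataProp {X : Type*} [MetricSpace X] {n : ℕ} (h : NagataProp X n) :
    nagataDim X ≤ n :=
  sInf_le ⟨n, rfl, h⟩

lemma nagataProp_of_nagataDim_eq {X : Type*} [MetricSpace X] {n : ℕ} (h : nagataDim X = n) :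
    NagataProp X n := by
  have hne : {k : ℕ∞ | ∃ n : ℕ, k = n ∧ NagataProp X n}.Nonempty := by
    by_contra he
    rw [not_nonempty_iff_eq_empty] at he
    simp [nagataDim, he] at h
  obtain ⟨k, hk, hkX⟩ := csInf_mem hne
  rw [← nagataDim, h] at hk
  rwa [Nat.cast_injective hk]

theorem nagataDim_prod_le_general {X X' : Type*} [MetricSpace X] [MetricSpace X'] :
    nagataDim (X × X') ≤ nagataDim X + nagataDim X' := by
  cases hX : nagataDim X using ENat.recTopCoe with
  | top => simp
  | coe n =>
    cases hX' : nagataDim X' using ENat.recTopCoe with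
    | top => simp
    | coe m =>
      exact_mod_cast nagataDim_le_of_nagataProp
        ((nagataProp_of_nagataDim_eq hX).prod (nagataProp_of_nagataDim_eq hX'))

theorem nagataDim_prod_le {X X' : Type*} [MetricSpace X] [MetricSpace X']
    [Nonempty X] [Nonempty X'] :
    nagataDim (X × X') ≤ nagataDim X + nagataDim X' :=
  nagataDim_prod_le_general
end

section
/- Let X, Y be metric spaces and λ, μ > 0. Suppose there exist a 1-Lipschitz map f : X → Y and a map h : X × [0,∞) → X such that: (i) for every nonempty bounded set C ⊆ Y there is a point y ∈ Y such that every x ∈ f⁻¹(C) has a companion x' ∈ f⁻¹({y}) with d(x,x') ≤ λ·diam C; (ii) d(h(x,t), x) ≤ t for all x, t; (iii) whenever f(x) = f(x') and t ≥ μ·d(x,x'), then h(x,t) = h(x',t). Then dim_N X ≤ dim_N Y. -/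
open Metric Set

lemma nagata_key {X Y : Type*} [MetricSpace X] [MetricSpace Y]
    (lam mu : ℝ) (hlam : 0 < lam) (hmu : 0 < mu)
    (f : X → Y) (hf : LipschitzWith 1 f) (h : X → ℝ → X)
    (h1 : ∀ C : Set Y, C.Nonempty → Bornology.IsBounded C →
      ∃ y : Y, ∀ x ∈ f ⁻¹' C, ∃ x' : X, f x' = y ∧ dist x x' ≤ lam * Metric.diam C)
    (h2 : ∀ x : X, ∀ t : ℝ, 0 ≤ t → dist (h x t) x ≤ t)
    (h3 : ∀ x x' : X, ∀ t : ℝ, f x = f x' → mu * dist x x' ≤ t → h x t = h x' t)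
    (n : ℕ) (hY : NagataProp Y n) : NagataProp X n := by
  classical
  obtain ⟨c, hc, hB⟩ := hY
  refine ⟨2 * (lam * c + mu * (2 * lam * c + 1)), by positivity, ?_⟩
  intro s hs
  obtain ⟨𝓑, hcov, hdiam, hmult⟩ := hB s hs
  -- companion functions
  have H : ∀ B : Set Y, ∃ g : X → X, B ∈ 𝓑 →
      ∀ x x', f x ∈ B → f x' ∈ B →
        f (g x) = f (g x') ∧ dist x (g x) ≤ lam * Metric.diam B := by
    intro B
    by_cases hne : (f ⁻¹' B).Nonempty
    · by_cases hBmem : B ∈ 𝓑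
      · have hBne : B.Nonempty := ⟨f hne.choose, hne.choose_spec⟩
        have hbd : Bornology.IsBounded B := by
          rw [Metric.isBounded_iff_ediam_ne_top]
          exact ne_top_of_le_ne_top ENNReal.ofReal_ne_top (hdiam B hBmem)
        obtain ⟨y, hy⟩ := h1 B hBne hbd
        choose g0 hg0 hg0' using hy
        refine ⟨fun x => if hx : f x ∈ B then g0 x hx else x, fun _ x x' hx hx' => ?_⟩
        refine ⟨?_, ?_⟩
        · simp only [dif_pos hx, dif_pos hx']
          rw [hg0 x hx, hg0 x' hx']
        · simpa only [dif_pos hx] using hg0' x hx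
      · exact ⟨id, fun hm => absurd hm hBmem⟩
    · exact ⟨id, fun _ x _ hx _ => absurd ⟨x, hx⟩ hne⟩
  choose g hg using H
  set T : ℝ := mu * (2 * lam * c * s + s) with hT
  have hT0 : 0 ≤ T := by positivity
  have hdiamB : ∀ B ∈ 𝓑, Metric.diam B ≤ c * s := by
    intro B hBmem
    have := hdiam B hBmem
    have h' := ENNReal.toReal_mono ENNReal.ofReal_ne_top this
    rwa [ENNReal.toReal_ofReal (by positivity)] at h'
  refine ⟨{A : Set X | ∃ B ∈ 𝓑, ∃ p : X, A = {x | f x ∈ B ∧ h (g B x) T = p}}, ?_, ?_, ?_⟩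
  · -- covering
    apply eq_univ_of_forall
    intro x
    have : f x ∈ ⋃₀ 𝓑 := by rw [hcov]; trivial
    obtain ⟨B, hBmem, hxB⟩ := this
    exact ⟨_, ⟨B, hBmem, h (g B x) T, rfl⟩, hxB, rfl⟩
  · -- diameters
    rintro A ⟨B, hBmem, p, rfl⟩
    apply EMetric.diam_le
    intro x hx y hy
    rw [edist_dist]
    apply ENNReal.ofReal_le_ofReal
    obtain ⟨hxB, hxp⟩ := hx
    obtain ⟨hyB, hyp⟩ := hy
    have bx : dist x p ≤ lam * (c * s) + T := by
      calc dist x p ≤ dist x (g B x) + dist (g B x) (h (g B x) T) := by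
            rw [← hxp]; exact dist_triangle _ _ _
        _ ≤ lam * Metric.diam B + T := by
            gcongr
            · exact (hg B hBmem x x hxB hxB).2
            · rw [dist_comm]; exact h2 _ T hT0
        _ ≤ lam * (c * s) + T := by
            gcongr
            exact hdiamB B hBmem
    have by' : dist y p ≤ lam * (c * s) + T := by
      calc dist y p ≤ dist y (g B y) + dist (g B y) (h (g B y) T) := by
            rw [← hyp]; exact dist_triangle _ _ _
        _ ≤ lam * Metric.diam B + T := by
            gcongr
            · exact (hg B hBmem y y hyB hyB).2
            · rw [dist_comm]; exact h2 _ T hT0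
        _ ≤ lam * (c * s) + T := by gcongr; exact hdiamB B hBmem
    calc dist x y ≤ dist x p + dist y p := dist_triangle_right _ _ _
      _ ≤ (lam * (c * s) + T) + (lam * (c * s) + T) := add_le_add bx by'
      _ = 2 * (lam * c + mu * (2 * lam * c + 1)) * s := by rw [hT]; ring
  · -- multiplicity
    intro E hE
    rcases E.eq_empty_or_nonempty with rfl | hEne
    · exact ⟨∅, by simp, by simp [Set.inter_empty]⟩
    obtain ⟨x0, hx0⟩ := hEne
    have hEdist : ∀ x ∈ E, ∀ y ∈ E, dist x y ≤ s := by
      intro x hx y hy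
      have : edist x y ≤ ENNReal.ofReal s := le_trans (EMetric.edist_le_diam_of_mem hx hy) hE
      rw [edist_dist] at this
      exact (ENNReal.ofReal_le_ofReal_iff hs.le).mp this
    have hF : EMetric.diam (f '' E) ≤ ENNReal.ofReal s := by
      calc EMetric.diam (f '' E) ≤ 1 * EMetric.diam E := hf.ediam_image_le E
        _ ≤ ENNReal.ofReal s := by rwa [one_mul]
    obtain ⟨TY, hTYcard, hTY⟩ := hmult (f '' E) hF
    classical
    set pB : Set Y → X := fun B =>
      if hx : (E ∩ f ⁻¹' B).Nonempty then h (g B hx.choose) T else x0 with hpB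
    refine ⟨TY.image (fun B => {x | f x ∈ B ∧ h (g B x) T = pB B}), ?_, ?_⟩
    · exact le_trans (Finset.card_image_le) hTYcard
    · rintro A ⟨B, hBmem, p, rfl⟩ ⟨x, ⟨hxB, hxp⟩, hxE⟩
      have hBTY : B ∈ TY := hTY B hBmem ⟨f x, hxB, ⟨x, hxE, rfl⟩⟩
      have hint : (E ∩ f ⁻¹' B).Nonempty := ⟨x, hxE, hxB⟩
      have hppB : p = pB B := by
        rw [hpB]
        simp only [dif_pos hint]
        set x1 := hint.choose with hx1
        have hx1spec : x1 ∈ E ∩ f ⁻¹' B := hint.choose_spec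
        have hx1E : x1 ∈ E := hx1spec.1
        have hx1B : f x1 ∈ B := hx1spec.2
        have h12 := hg B hBmem x x1 hxB hx1B
        have hd : dist (g B x) (g B x1) ≤ 2 * lam * c * s + s := by
          have d1 : dist x (g B x) ≤ lam * (c * s) :=
            le_trans (hg B hBmem x x1 hxB hx1B).2
              (by have := hdiamB B hBmem; nlinarith)
          have d2 : dist x1 (g B x1) ≤ lam * (c * s) :=
            le_trans (hg B hBmem x1 x hx1B hxB).2
              (by have := hdiamB B hBmem; nlinarith)
          have d3 : dist x x1 ≤ s := hEdist x hxE x1 hx1E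
          calc dist (g B x) (g B x1)
              ≤ dist (g B x) x + dist x x1 + dist x1 (g B x1) := dist_triangle4 _ _ _ _
            _ ≤ lam * (c * s) + s + lam * (c * s) := by
                rw [dist_comm (g B x) x]; exact add_le_add (add_le_add d1 d3) d2
            _ = 2 * lam * c * s + s := by ring
        have heq : h (g B x) T = h (g B x1) T := by
          apply h3 _ _ _ h12.1
          rw [hT]
          have : 0 ≤ mu := hmu.le
          nlinarith
        rw [← hxp, heq]
      rw [hppB]
      exact Finset.mem_image_of_mem _ hBTY

theorem nagataDim_le_of_lipschitz_projection {X Y : Type*} [MetricSpace X] [MetricSpace Y]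
    (lam mu : ℝ) (hlam : 0 < lam) (hmu : 0 < mu)
    (f : X → Y) (hf : LipschitzWith 1 f) (h : X → ℝ → X)
    (h1 : ∀ C : Set Y, C.Nonempty → Bornology.IsBounded C →
      ∃ y : Y, ∀ x ∈ f ⁻¹' C, ∃ x' : X, f x' = y ∧ dist x x' ≤ lam * Metric.diam C)
    (h2 : ∀ x : X, ∀ t : ℝ, 0 ≤ t → dist (h x t) x ≤ t)
    (h3 : ∀ x x' : X, ∀ t : ℝ, f x = f x' → mu * dist x x' ≤ t → h x t = h x' t) :
    nagataDim X ≤ nagataDim Y := by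
  apply le_sInf
  rintro b ⟨n, rfl, hYn⟩
  exact sInf_le ⟨n, rfl, nagata_key lam mu hlam hmu f hf h h1 h2 h3 n hYn⟩
end

section
/- If f : X → Y is a quasisymmetric homeomorphism between metric spaces, then dim_N X = dim_N Y; i.e., the Nagata dimension is a quasisymmetry invariant. -/
/-!
Quasisymmetric maps distort scales non-uniformly, so a Nagata covering of `Y` at scale `s` is
pulled back from coverings of `X` at a scale `R x` that varies with the point: the largest
radius of a ball about `x` whose image has diameter at most `δ s`, where `δ` depends only on `f`
and the Nagata constant of `X`. This `R` is `1`-Lipschitz, and quasisymmetry turns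
`dist (f u) (f v) ≤ s` into `dist u v ≤ ε R u`.

On `X`, cut out the bands `Λ ^ k ≤ R < Λ ^ (k + 1)`, cover band `k` by the pieces of a Nagata
covering at scale `a Λ ^ k`, and merge every piece that comes within `a Λ ^ k` of band `k + 1`
into a piece of band `k + 1`; the Lipschitz bound on `R` keeps merged pieces from merging again.
Each block then lies in a ball `closedBall y r` with `r < R y`, so its image has diameter at most
`δ s`, and a set of relative size `ε R` spans at most two bands, so the blocks it meets are read
off from the sets of a single Nagata covering that meet a slightly larger set. The inverse of a
quasisymmetric map is quasisymmetric, so the argument applies in both directions.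
-/

open Metric Set

open Filter Topology

section Quasisymmetry

variable {X Y : Type*} [PseudoMetricSpace X] [PseudoMetricSpace Y]

def RatioBound (f : X → Y) (t H : ℝ) : Prop :=
  ∀ x x' z, dist x z ≤ t * dist x' z → dist (f x) (f z) ≤ H * dist (f x') (f z)

theorem RatioBound.mono {f : X → Y} {t H H' : ℝ} (h : RatioBound f t H) (hH : H ≤ H') :
    RatioBound f t H' := fun x x' z hxz =>
  (h x x' z hxz).trans (mul_le_mul_of_nonneg_right hH dist_nonneg)

/-- The bound for `f`, with `x` and `x'` exchanged, read contrapositively. -/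
theorem RatioBound.of_leftInverse {Y : Type*} [MetricSpace Y] {f : X → Y} {g : Y → X}
    (hfg : Function.LeftInverse f g) {τ H t : ℝ} (hτ : 0 < τ) (hH : 0 ≤ H) (hHt : H * t < 1)
    (h : RatioBound f τ H) : RatioBound g t τ⁻¹ := by
  intro u u' w huw
  by_contra! hlt
  have hclose : dist (g u') (g w) ≤ τ * dist (g u) (g w) := by
    rw [inv_mul_lt_iff₀ hτ] at hlt
    exact hlt.le
  have hu'w : dist u' w ≤ H * t * dist u' w := by
    have := h _ _ _ hclose
    rw [hfg, hfg, hfg] at this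
    calc dist u' w ≤ H * dist u w := this
      _ ≤ H * (t * dist u' w) := mul_le_mul_of_nonneg_left huw hH
      _ = H * t * dist u' w := by ring
  have hu'w0 : dist u' w = 0 := by nlinarith [dist_nonneg (x := u') (y := w)]
  obtain rfl : u = w := dist_le_zero.1 (by simpa [hu'w0] using huw)
  rw [dist_self] at hlt
  exact hlt.not_ge (by positivity)

/-- Quasisymmetry with a distortion function that is finite and tends to `0` at `0`, stated as
bounds on the distortion of distance ratios. -/
structure IsQuasisymmetric (f : X → Y) : Prop where
  exists_ratioBound : ∀ t > 0, ∃ H, RatioBound f t H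
  exists_ratioBound_le : ∀ K > 0, ∃ t > 0, RatioBound f t K

theorem IsQuasisymmetric.of_leftInverse {Y : Type*} [MetricSpace Y] {f : X → Y} {g : Y → X}
    (hfg : Function.LeftInverse f g) (hf : IsQuasisymmetric f) : IsQuasisymmetric g where
  exists_ratioBound t ht := by
    obtain ⟨τ, hτ, hK⟩ := hf.exists_ratioBound_le (t + 1)⁻¹ (by positivity)
    refine ⟨τ⁻¹, hK.of_leftInverse hfg hτ (by positivity) ?_⟩
    rw [inv_mul_lt_one₀ (by positivity)]
    linarith
  exists_ratioBound_le K hK := by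
    obtain ⟨H, hH⟩ := hf.exists_ratioBound K⁻¹ (by positivity)
    refine ⟨(max H 0 + 1)⁻¹, by positivity, ?_⟩
    have := (hH.mono (le_max_left H 0)).of_leftInverse hfg (inv_pos.2 hK) (le_max_right H 0)
      (t := (max H 0 + 1)⁻¹) (by rw [mul_inv_lt_iff₀ (by positivity)]; linarith)
    rwa [inv_inv] at this

theorem isQuasisymmetric_of_continuousWithinAt {f : X → Y} {η : ℝ → ℝ} (hη0 : η 0 = 0)
    (hηc : ContinuousWithinAt η (Ici 0) 0)
    (hqs : ∀ (x x' z : X) (t : ℝ), 0 < t →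
      dist x z ≤ t * dist x' z → dist (f x) (f z) ≤ η t * dist (f x') (f z)) :
    IsQuasisymmetric f where
  exists_ratioBound t ht := ⟨η t, fun x x' z => hqs x x' z t ht⟩
  exists_ratioBound_le K hK := by
    have hsmall : ∀ᶠ t in 𝓝[>] 0, η t < K :=
      (hηc.mono Ioi_subset_Ici_self).eventually (gt_mem_nhds (by rwa [hη0]))
    obtain ⟨t, htK, ht⟩ := (hsmall.and self_mem_nhdsWithin).exists
    exact ⟨t, ht, RatioBound.mono (fun x x' z => hqs x x' z t ht) htK.le⟩

end Quasisymmetry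

section MaxRadius

variable {X : Type*} [PseudoMetricSpace X] {S : Set X → Prop} {x : X} {r : ℝ}

noncomputable def maxRadius (S : Set X → Prop) (x : X) : ℝ :=
  sSup {r | 0 < r ∧ S (closedBall x r)}

theorem bddAbove_radii (hS : Antitone S) {r₀ : ℝ} (hr₀ : ¬ S (closedBall x r₀)) :
    BddAbove {r | 0 < r ∧ S (closedBall x r)} :=
  ⟨r₀, fun _ hr => not_lt.1 fun hlt => hr₀ (hS (closedBall_subset_closedBall hlt.le) hr.2)⟩

theorem maxRadius_pos (hS : Antitone S) (hpos : ∃ r > 0, S (closedBall x r))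
    (hbdd : ∃ r, ¬ S (closedBall x r)) : 0 < maxRadius S x := by
  obtain ⟨r, hr, hSr⟩ := hpos
  obtain ⟨r₀, hr₀⟩ := hbdd
  exact hr.trans_le (le_csSup (bddAbove_radii hS hr₀) ⟨hr, hSr⟩)

theorem closedBall_of_lt_maxRadius (hS : Antitone S) (hpos : ∃ r > 0, S (closedBall x r))
    (hr : r < maxRadius S x) : S (closedBall x r) := by
  obtain ⟨r', hr', hrr'⟩ := exists_lt_of_lt_csSup hpos hr
  exact hS (closedBall_subset_closedBall hrr'.le) hr'.2

theorem not_closedBall_of_maxRadius_lt (hS : Antitone S) (hpos : ∃ r > 0, S (closedBall x r))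
    (hbdd : ∃ r, ¬ S (closedBall x r)) (hr : maxRadius S x < r) : ¬ S (closedBall x r) := by
  obtain ⟨r₀, hr₀⟩ := hbdd
  refine fun hSr => hr.not_ge (le_csSup (bddAbove_radii hS hr₀) ⟨?_, hSr⟩)
  exact (maxRadius_pos hS hpos ⟨r₀, hr₀⟩).trans hr

theorem maxRadius_le_add_dist (hS : Antitone S) (hpos : ∀ x, ∃ r > 0, S (closedBall x r))
    (hbdd : ∀ x, ∃ r, ¬ S (closedBall x r)) (x y : X) :
    maxRadius S x ≤ maxRadius S y + dist x y := by
  refine csSup_le (hpos x) fun r ⟨hr, hSr⟩ => ?_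
  rcases le_or_gt r (dist x y) with hle | hlt
  · linarith [maxRadius_pos hS (hpos y) (hbdd y)]
  · have hy : S (closedBall y (r - dist x y)) :=
      hS (closedBall_subset_closedBall' (by rw [dist_comm]; linarith)) hSr
    obtain ⟨r₀, hr₀⟩ := hbdd y
    have : r - dist x y ≤ maxRadius S y := le_csSup (bddAbove_radii hS hr₀) ⟨sub_pos.2 hlt, hy⟩
    linarith

end MaxRadius

def MeetsAtMost {X : Type*} (𝓑 : Set (Set X)) (E : Set X) (m : ℕ) : Prop :=
  ∃ T : Finset (Set X), T.card ≤ m ∧ ∀ B ∈ 𝓑, (B ∩ E).Nonempty → B ∈ T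

theorem MeetsAtMost.of_map {X Y : Type*} {𝓑 : Set (Set X)} {G : Set X} {m : ℕ}
    {𝓓 : Set (Set Y)} {E : Set Y} (g : Set X → Set Y) (h : MeetsAtMost 𝓑 G m)
    (hg : ∀ D ∈ 𝓓, (D ∩ E).Nonempty → ∃ B ∈ 𝓑, (B ∩ G).Nonempty ∧ g B = D) :
    MeetsAtMost 𝓓 E m := by
  classical
  obtain ⟨T, hT, hmem⟩ := h
  refine ⟨T.image g, Finset.card_image_le.trans hT, fun D hD hDE => ?_⟩
  obtain ⟨B, hB, hBG, rfl⟩ := hg D hD hDE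
  exact Finset.mem_image_of_mem g (hmem B hB hBG)

structure NagataScales (X : Type*) [PseudoMetricSpace X] (n : ℕ) where
  c : ℝ
  a : ℝ
  Λ : ℕ
  c_nonneg : 0 ≤ c
  a_pos : 0 < a
  mul_a_lt_one : (2 * c + 1) * a < 1
  le_Λ : 2 * c + 3 ≤ Λ
  cover : ℤ → Set (Set X)
  sUnion_cover (k : ℤ) : ⋃₀ cover k = univ
  dist_le (k : ℤ) : ∀ B ∈ cover k, ∀ u ∈ B, ∀ v ∈ B, dist u v ≤ c * a * Λ ^ k
  meetsAtMost (k : ℤ) (G : Set X) :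
    (∀ u ∈ G, ∀ v ∈ G, dist u v ≤ a * Λ ^ k) → MeetsAtMost (cover k) G (n + 1)

theorem NagataProp.nonempty_nagataScales {X : Type*} [MetricSpace X] {n : ℕ}
    (h : NagataProp X n) : Nonempty (NagataScales X n) := by
  obtain ⟨c, hc, hcov⟩ := h
  set a : ℝ := (2 * c + 2)⁻¹
  set Λ : ℕ := ⌈2 * c⌉₊ + 3
  have ha : 0 < a := by positivity
  have hscale (k : ℤ) : 0 < a * (Λ : ℝ) ^ k := by positivity
  choose 𝓑 hcover hdiam hmult using fun k : ℤ => hcov _ (hscale k)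
  refine ⟨⟨c, a, Λ, hc.le, ha, ?_, ?_, 𝓑, hcover, fun k B hB u hu v hv => ?_,
    fun k G hG => hmult k G (ediam_le_of_forall_dist_le hG)⟩⟩
  · rw [← div_eq_mul_inv, div_lt_one (by positivity)]
    linarith
  · simp only [Λ]
    push_cast
    linarith [Nat.le_ceil (2 * c)]
  · rw [mul_assoc]
    exact (edist_le_ofReal (by positivity)).1
      ((edist_le_ediam_of_mem hu hv).trans (hdiam k B hB))

namespace NagataScales

variable {X : Type*} [PseudoMetricSpace X] {n : ℕ} (𝓢 : NagataScales X n) (R : X → ℝ)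

theorem three_le_Λ : (3 : ℝ) ≤ 𝓢.Λ := by linarith [𝓢.le_Λ, 𝓢.c_nonneg]

theorem one_lt_Λ : 1 < 𝓢.Λ := by exact_mod_cast (by linarith [𝓢.three_le_Λ] : (1 : ℝ) < 𝓢.Λ)

theorem Λ_pos : (0 : ℝ) < 𝓢.Λ := by linarith [𝓢.three_le_Λ]

theorem zpow_add_one (k : ℤ) : (𝓢.Λ : ℝ) ^ (k + 1) = 𝓢.Λ ^ k * 𝓢.Λ :=
  zpow_add_one₀ 𝓢.Λ_pos.ne' k

theorem add_one_mul_a_lt_one : (𝓢.c + 1) * 𝓢.a < 1 := by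
  nlinarith [𝓢.mul_a_lt_one, 𝓢.c_nonneg, 𝓢.a_pos]

noncomputable def ε : ℝ := 𝓢.a / (4 * 𝓢.Λ)

theorem ε_pos : 0 < 𝓢.ε := div_pos 𝓢.a_pos (by linarith [𝓢.Λ_pos])

theorem ε_mul_Λ : 𝓢.ε * 𝓢.Λ = 𝓢.a / 4 := by
  rw [ε]
  field_simp [𝓢.Λ_pos.ne']

theorem ε_le_one : 𝓢.ε ≤ 1 := by
  nlinarith [𝓢.ε_mul_Λ, 𝓢.three_le_Λ, 𝓢.ε_pos, 𝓢.add_one_mul_a_lt_one, 𝓢.c_nonneg, 𝓢.a_pos]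

theorem exists_mem_cover (k : ℤ) (x : X) : ∃ B ∈ 𝓢.cover k, x ∈ B :=
  mem_sUnion.1 (by rw [𝓢.sUnion_cover k]; trivial)

noncomputable def band (x : X) : ℤ := Int.log 𝓢.Λ (R x)

noncomputable def cell (x : X) : Set X := (𝓢.exists_mem_cover (𝓢.band R x) x).choose

/-- A piece of `X` is the set of points with a given label: a band together with a set of the
covering at the scale of that band. Points may lie in several sets of the covering, but in only
one piece. -/
noncomputable def label (x : X) : ℤ × Set X := (𝓢.band R x, 𝓢.cell R x)

def Absorbed (ℓ : ℤ × Set X) : Prop :=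
  ∃ m, 𝓢.band R m = ℓ.1 + 1 ∧ ∃ p, 𝓢.label R p = ℓ ∧ dist p m ≤ 𝓢.a * 𝓢.Λ ^ ℓ.1

open Classical in
noncomputable def root (ℓ : ℤ × Set X) : ℤ × Set X :=
  if h : 𝓢.Absorbed R ℓ then 𝓢.label R h.choose else ℓ

def block (ℓ : ℤ × Set X) : Set X := {x | 𝓢.root R (𝓢.label R x) = ℓ}

variable {R}

theorem zpow_band_le {x : X} (hx : 0 < R x) : (𝓢.Λ : ℝ) ^ 𝓢.band R x ≤ R x :=
  Int.zpow_log_le_self 𝓢.one_lt_Λ hx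

theorem lt_zpow_band_add_one (x : X) : R x < (𝓢.Λ : ℝ) ^ (𝓢.band R x + 1) :=
  Int.lt_zpow_succ_log_self 𝓢.one_lt_Λ _

theorem zpow_le_zpow_band {x : X} {k : ℤ} (hk : k ≤ 𝓢.band R x) :
    (𝓢.Λ : ℝ) ^ k ≤ 𝓢.Λ ^ 𝓢.band R x :=
  zpow_le_zpow_right₀ (by linarith [𝓢.three_le_Λ]) hk

theorem mem_cell (x : X) : x ∈ 𝓢.cell R x :=
  (𝓢.exists_mem_cover (𝓢.band R x) x).choose_spec.2

theorem cell_mem_cover (x : X) : 𝓢.cell R x ∈ 𝓢.cover (𝓢.band R x) :=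
  (𝓢.exists_mem_cover (𝓢.band R x) x).choose_spec.1

theorem dist_le_of_label_eq {x y : X} (h : 𝓢.label R y = 𝓢.label R x) :
    dist y x ≤ 𝓢.c * 𝓢.a * 𝓢.Λ ^ 𝓢.band R x := by
  have hcell : 𝓢.cell R y = 𝓢.cell R x := congrArg Prod.snd h
  refine 𝓢.dist_le _ _ (𝓢.cell_mem_cover x) _ ?_ _ (𝓢.mem_cell x)
  exact hcell ▸ 𝓢.mem_cell y

theorem root_of_not_absorbed {ℓ : ℤ × Set X} (h : ¬ 𝓢.Absorbed R ℓ) : 𝓢.root R ℓ = ℓ :=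
  dif_neg h

theorem exists_root_of_absorbed {x : X} (h : 𝓢.Absorbed R (𝓢.label R x)) :
    ∃ y, 𝓢.root R (𝓢.label R x) = 𝓢.label R y ∧ 𝓢.band R y = 𝓢.band R x + 1 ∧
      dist x y ≤ (𝓢.c + 1) * 𝓢.a * 𝓢.Λ ^ 𝓢.band R x := by
  obtain ⟨hband, p, hp, hpy⟩ := h.choose_spec
  refine ⟨h.choose, dif_pos h, hband, ?_⟩
  calc dist x h.choose ≤ dist p x + dist p h.choose := dist_triangle_left _ _ _
    _ ≤ 𝓢.c * 𝓢.a * 𝓢.Λ ^ 𝓢.band R x + 𝓢.a * 𝓢.Λ ^ 𝓢.band R x :=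
      add_le_add (𝓢.dist_le_of_label_eq hp) hpy
    _ = (𝓢.c + 1) * 𝓢.a * 𝓢.Λ ^ 𝓢.band R x := by ring

/-- A root of band `k + 1` that was itself absorbed would make `R` climb from below
`Λ ^ (k + 1)` to `Λ ^ (k + 2)` over a distance of order `a Λ ^ (k + 1)`. -/
theorem not_absorbed_root (hRpos : ∀ x, 0 < R x) (hR : ∀ x y, R x ≤ R y + dist x y) (x : X) :
    ¬ 𝓢.Absorbed R (𝓢.root R (𝓢.label R x)) := by
  by_cases h : 𝓢.Absorbed R (𝓢.label R x)
  swap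
  · rwa [𝓢.root_of_not_absorbed h]
  obtain ⟨y, hroot, hband, hxy⟩ := 𝓢.exists_root_of_absorbed h
  rw [hroot]
  rintro ⟨m, hm, p, hp, hpm⟩
  change 𝓢.band R m = 𝓢.band R y + 1 at hm
  change dist p m ≤ 𝓢.a * 𝓢.Λ ^ 𝓢.band R y at hpm
  have hpy := 𝓢.dist_le_of_label_eq hp
  have hRm := 𝓢.zpow_band_le (hRpos m)
  have hRx := 𝓢.lt_zpow_band_add_one (R := R) x
  have hmx : dist m x ≤ dist p m + dist p y + dist x y := by
    linarith [dist_triangle4 m p y x, dist_comm m p, dist_comm y x]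
  rw [hm, hband, 𝓢.zpow_add_one, 𝓢.zpow_add_one] at hRm
  rw [hband, 𝓢.zpow_add_one] at hpm hpy
  rw [𝓢.zpow_add_one] at hRx
  have hT : (0 : ℝ) < 𝓢.Λ ^ 𝓢.band R x := zpow_pos 𝓢.Λ_pos _
  have hq := 𝓢.add_one_mul_a_lt_one
  nlinarith [hR m x, mul_pos hT 𝓢.Λ_pos, mul_lt_mul_of_pos_right hq (mul_pos hT 𝓢.Λ_pos),
    mul_lt_mul_of_pos_right hq hT, mul_le_mul_of_nonneg_left 𝓢.three_le_Λ (mul_pos hT 𝓢.Λ_pos).le]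

theorem root_root (hRpos : ∀ x, 0 < R x) (hR : ∀ x y, R x ≤ R y + dist x y) (x : X) :
    𝓢.root R (𝓢.root R (𝓢.label R x)) = 𝓢.root R (𝓢.label R x) :=
  𝓢.root_of_not_absorbed (𝓢.not_absorbed_root hRpos hR x)

theorem exists_anchor (x : X) :
    ∃ y, 𝓢.root R (𝓢.label R x) = 𝓢.label R y ∧ 𝓢.band R x ≤ 𝓢.band R y ∧
      dist x y ≤ (𝓢.c + 1) * 𝓢.a * 𝓢.Λ ^ 𝓢.band R x := by
  by_cases h : 𝓢.Absorbed R (𝓢.label R x)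
  · obtain ⟨y, hroot, hband, hxy⟩ := 𝓢.exists_root_of_absorbed h
    exact ⟨y, hroot, by omega, hxy⟩
  · refine ⟨x, 𝓢.root_of_not_absorbed h, le_rfl, ?_⟩
    rw [dist_self]
    have := 𝓢.c_nonneg
    have := 𝓢.a_pos
    positivity

theorem exists_block_subset_closedBall (hRpos : ∀ x, 0 < R x) (x : X) :
    ∃ y r, r < R y ∧ 𝓢.block R (𝓢.root R (𝓢.label R x)) ⊆ closedBall y r := by
  obtain ⟨y, hxy, -⟩ := 𝓢.exists_anchor x
  refine ⟨y, (2 * 𝓢.c + 1) * 𝓢.a * 𝓢.Λ ^ 𝓢.band R y, ?_, fun z hz => ?_⟩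
  · have hT : (0 : ℝ) < 𝓢.Λ ^ 𝓢.band R y := zpow_pos 𝓢.Λ_pos _
    nlinarith [𝓢.mul_a_lt_one, 𝓢.zpow_band_le (hRpos y)]
  obtain ⟨y', hzy', hband, hzy⟩ := 𝓢.exists_anchor z
  have hlabel : 𝓢.label R y' = 𝓢.label R y := hzy'.symm.trans (hz.trans hxy)
  have hband' : 𝓢.band R y' = 𝓢.band R y := congrArg Prod.fst hlabel
  have hzpow := 𝓢.zpow_le_zpow_band (R := R) (hband.trans_eq hband')
  have hca : 0 ≤ (𝓢.c + 1) * 𝓢.a := mul_nonneg (by linarith [𝓢.c_nonneg]) 𝓢.a_pos.le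
  rw [mem_closedBall]
  calc dist z y ≤ dist z y' + dist y' y := dist_triangle _ _ _
    _ ≤ (𝓢.c + 1) * 𝓢.a * 𝓢.Λ ^ 𝓢.band R y + 𝓢.c * 𝓢.a * 𝓢.Λ ^ 𝓢.band R y :=
      add_le_add (hzy.trans (mul_le_mul_of_nonneg_left hzpow hca))
        (𝓢.dist_le_of_label_eq hlabel)
    _ = (2 * 𝓢.c + 1) * 𝓢.a * 𝓢.Λ ^ 𝓢.band R y := by ring

theorem exists_band_window (hRpos : ∀ x, 0 < R x) (hR : ∀ x y, R x ≤ R y + dist x y)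
    {E : Set X} (hE : ∀ u ∈ E, ∀ v ∈ E, dist u v ≤ 𝓢.ε * R u) (hne : E.Nonempty) :
    ∃ k, (∀ v ∈ E, 𝓢.band R v = k ∨ 𝓢.band R v = k + 1) ∧
      ∀ u ∈ E, ∀ v ∈ E, dist u v ≤ 𝓢.a * 𝓢.Λ ^ k / 2 := by
  have hRle : ∀ u ∈ E, ∀ v ∈ E, R v ≤ 2 * R u := fun u hu v hv => by
    nlinarith [hR v u, hE u hu v hv, dist_comm u v, 𝓢.ε_le_one, hRpos u]
  have hband_le : ∀ u ∈ E, ∀ v ∈ E, 𝓢.band R v ≤ 𝓢.band R u + 1 := fun u hu v hv => by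
    have hRv : R v < 𝓢.Λ ^ (𝓢.band R u + 1 + 1) := by
      rw [𝓢.zpow_add_one]
      nlinarith [hRle u hu v hv, 𝓢.lt_zpow_band_add_one (R := R) u, 𝓢.three_le_Λ,
        zpow_pos 𝓢.Λ_pos (𝓢.band R u + 1)]
    have := (Int.lt_zpow_iff_log_lt 𝓢.one_lt_Λ (hRpos v)).1 hRv
    rw [band]
    omega
  obtain ⟨u₁, hu₁⟩ := hne
  obtain ⟨k, ⟨u₀, hu₀, rfl⟩, hmin⟩ := Int.exists_least_of_bdd
    (P := fun j => ∃ v ∈ E, 𝓢.band R v = j)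
    ⟨𝓢.band R u₁ - 1, fun j ⟨v, hv, hvj⟩ => by linarith [hband_le v hv u₁ hu₁]⟩
    ⟨_, u₁, hu₁, rfl⟩
  refine ⟨𝓢.band R u₀, fun v hv => ?_, fun u hu v hv => ?_⟩
  · have := hmin _ ⟨v, hv, rfl⟩
    have := hband_le u₀ hu₀ v hv
    omega
  · have hRu₀ := 𝓢.lt_zpow_band_add_one (R := R) u₀
    rw [𝓢.zpow_add_one] at hRu₀
    calc dist u v ≤ 𝓢.ε * R u := hE u hu v hv
      _ ≤ 𝓢.ε * (2 * R u₀) := mul_le_mul_of_nonneg_left (hRle u₀ hu₀ u hu) 𝓢.ε_pos.le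
      _ ≤ 𝓢.ε * (2 * (𝓢.Λ ^ 𝓢.band R u₀ * 𝓢.Λ)) := by gcongr; exact 𝓢.ε_pos.le
      _ = 2 * (𝓢.ε * 𝓢.Λ) * 𝓢.Λ ^ 𝓢.band R u₀ := by ring
      _ = 𝓢.a * 𝓢.Λ ^ 𝓢.band R u₀ / 2 := by rw [𝓢.ε_mul_Λ]; ring

/-- If `E` reaches the upper of its two bands, the pieces of the lower band that it meets are
absorbed, and their roots are found near `E` in the upper band. -/
theorem exists_representatives_in_band (hRpos : ∀ x, 0 < R x)
    (hR : ∀ x y, R x ≤ R y + dist x y) {E : Set X}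
    (hE : ∀ u ∈ E, ∀ v ∈ E, dist u v ≤ 𝓢.ε * R u) :
    ∃ (j : ℤ) (G : Set X), (∀ u ∈ G, ∀ v ∈ G, dist u v ≤ 𝓢.a * 𝓢.Λ ^ j) ∧
      ∀ v ∈ E, ∃ y ∈ G, 𝓢.band R y = j ∧ 𝓢.root R (𝓢.label R v) = 𝓢.root R (𝓢.label R y) := by
  rcases E.eq_empty_or_nonempty with rfl | hne
  · exact ⟨0, ∅, by simp, by simp⟩
  obtain ⟨k, hband, hdiam⟩ := 𝓢.exists_band_window hRpos hR hE hne
  have haT : 0 < 𝓢.a * (𝓢.Λ : ℝ) ^ k := mul_pos 𝓢.a_pos (zpow_pos 𝓢.Λ_pos k)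
  by_cases htop : ∃ v₀ ∈ E, 𝓢.band R v₀ = k + 1
  swap
  · push Not at htop
    refine ⟨k, E, fun u hu v hv => (hdiam u hu v hv).trans (by linarith), fun v hv => ?_⟩
    exact ⟨v, hv, (hband v hv).resolve_right (htop v hv), rfl⟩
  obtain ⟨v₀, hv₀, hv₀k⟩ := htop
  have hca : 0 ≤ (𝓢.c + 1) * 𝓢.a * (𝓢.Λ : ℝ) ^ k := by
    have := 𝓢.c_nonneg
    rw [mul_assoc]
    positivity
  refine ⟨k + 1, {x | ∃ e ∈ E, dist x e ≤ (𝓢.c + 1) * 𝓢.a * 𝓢.Λ ^ k}, ?_, fun v hv => ?_⟩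
  · rintro x ⟨e₁, he₁, hx⟩ y ⟨e₂, he₂, hy⟩
    rw [𝓢.zpow_add_one]
    nlinarith [dist_triangle4 x e₁ e₂ y, hdiam e₁ he₁ e₂ he₂, dist_comm e₂ y,
      mul_le_mul_of_nonneg_left 𝓢.le_Λ haT.le]
  rcases hband v hv with hvk | hvk
  · have habs : 𝓢.Absorbed R (𝓢.label R v) := by
      refine ⟨v₀, by change _ = 𝓢.band R v + 1; omega, v, rfl, ?_⟩
      change dist v v₀ ≤ 𝓢.a * 𝓢.Λ ^ 𝓢.band R v
      rw [hvk]
      linarith [hdiam v hv v₀ hv₀]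
    obtain ⟨y, hroot, hyband, hvy⟩ := 𝓢.exists_root_of_absorbed habs
    refine ⟨y, ⟨v, hv, by rwa [dist_comm, ← hvk]⟩, by omega, ?_⟩
    rw [← hroot, 𝓢.root_root hRpos hR]
  · exact ⟨v, ⟨v, hv, by rwa [dist_self]⟩, hvk, rfl⟩

theorem meetsAtMost_blocks (hRpos : ∀ x, 0 < R x) (hR : ∀ x y, R x ≤ R y + dist x y)
    {E : Set X} (hE : ∀ u ∈ E, ∀ v ∈ E, dist u v ≤ 𝓢.ε * R u) :
    MeetsAtMost (range fun x => 𝓢.block R (𝓢.root R (𝓢.label R x))) E (n + 1) := by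
  obtain ⟨j, G, hG, hEG⟩ := 𝓢.exists_representatives_in_band hRpos hR hE
  refine (𝓢.meetsAtMost j G hG).of_map (fun U => 𝓢.block R (𝓢.root R (j, U))) ?_
  rintro _ ⟨x, rfl⟩ ⟨v, hvx, hvE⟩
  obtain ⟨y, hyG, rfl, hvy⟩ := hEG v hvE
  refine ⟨𝓢.cell R y, 𝓢.cell_mem_cover y, ⟨y, 𝓢.mem_cell y, hyG⟩, ?_⟩
  change 𝓢.block R (𝓢.root R (𝓢.label R y)) = _
  rw [← hvy, hvx]

end NagataScales

theorem NagataProp.exists_variable_scale_cover {X : Type*} [MetricSpace X] {n : ℕ}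
    (h : NagataProp X n) :
    ∃ ε > 0, ∀ R : X → ℝ, (∀ x, 0 < R x) → (∀ x y, R x ≤ R y + dist x y) →
      ∃ 𝓓 : Set (Set X), ⋃₀ 𝓓 = univ ∧ (∀ D ∈ 𝓓, ∃ y r, r < R y ∧ D ⊆ closedBall y r) ∧
        ∀ E : Set X, (∀ u ∈ E, ∀ v ∈ E, dist u v ≤ ε * R u) → MeetsAtMost 𝓓 E (n + 1) := by
  obtain ⟨𝓢⟩ := h.nonempty_nagataScales
  refine ⟨𝓢.ε, 𝓢.ε_pos, fun R hRpos hR => ⟨range fun x => 𝓢.block R (𝓢.root R (𝓢.label R x)),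
    sUnion_eq_univ_iff.2 fun x => ⟨_, mem_range_self x, rfl⟩, ?_,
    fun E hE => 𝓢.meetsAtMost_blocks hRpos hR hE⟩⟩
  rintro _ ⟨x, rfl⟩
  exact 𝓢.exists_block_subset_closedBall hRpos x

section Transfer

variable {X Y : Type*} [MetricSpace X] [MetricSpace Y] {f : X → Y} {ρ : ℝ} {y₁ y₂ : Y}

theorem IsQuasisymmetric.exists_pos_ediam_image_closedBall_le (hf : Function.Surjective f)
    (hqs : IsQuasisymmetric f) (hρ : 0 < ρ) (hy : ρ < dist y₁ y₂) (x : X) :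
    ∃ r > 0, ediam (f '' closedBall x r) ≤ ENNReal.ofReal ρ := by
  obtain ⟨p, hp⟩ : ∃ p, f p ≠ f x := by
    obtain ⟨x₁, rfl⟩ := hf y₁
    obtain ⟨x₂, rfl⟩ := hf y₂
    by_contra! h
    exact hy.not_ge (by rw [h x₁, h x₂, dist_self]; exact hρ.le)
  have hpx : 0 < dist (f p) (f x) := dist_pos.2 hp
  obtain ⟨t, ht, hK⟩ := hqs.exists_ratioBound_le (ρ / 2 / dist (f p) (f x)) (by positivity)
  have hnear : ∀ z ∈ closedBall x (t * dist p x), dist (f z) (f x) ≤ ρ / 2 := fun z hz => by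
    have := hK z p x hz
    rwa [div_mul_cancel₀ _ hpx.ne'] at this
  refine ⟨t * dist p x, mul_pos ht (dist_pos.2 fun h => hp (congrArg f h)), ?_⟩
  refine ediam_le_of_forall_dist_le ?_
  rintro _ ⟨z, hz, rfl⟩ _ ⟨w, hw, rfl⟩
  linarith [dist_triangle_right (f z) (f w) (f x), hnear z hz, hnear w hw]

theorem exists_not_ediam_image_closedBall_le (hf : Function.Surjective f) (hρ : 0 ≤ ρ)
    (hy : ρ < dist y₁ y₂) (x : X) : ∃ r, ¬ ediam (f '' closedBall x r) ≤ ENNReal.ofReal ρ := by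
  obtain ⟨x₁, rfl⟩ := hf y₁
  obtain ⟨x₂, rfl⟩ := hf y₂
  refine ⟨max (dist x₁ x) (dist x₂ x), fun hle => hy.not_ge ?_⟩
  have hmem (x' : X) (h : dist x' x ≤ max (dist x₁ x) (dist x₂ x)) :
      f x' ∈ f '' closedBall x (max (dist x₁ x) (dist x₂ x)) := mem_image_of_mem f h
  exact (edist_le_ofReal hρ).1 <| (edist_le_ediam_of_mem
    (hmem x₁ (le_max_left _ _)) (hmem x₂ (le_max_right _ _))).trans hle

/-- If the image of `closedBall u (2 * r)` is large, some point of that ball is `2 / ε` times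
further from `u` than `v` is, which forces `f u` and `f v` apart. -/
theorem RatioBound.dist_le_of_not_ediam_image_le {ε H s r : ℝ} (hε : 0 < ε) (hH₀ : 0 ≤ H)
    (hH : RatioBound f (2 / ε) H) {u v : X}
    (hr : ¬ ediam (f '' closedBall u (2 * r)) ≤ ENNReal.ofReal (2 * H * s))
    (huv : dist (f u) (f v) ≤ s) : dist u v ≤ ε * r := by
  by_contra! hlt
  refine hr (ediam_le_of_forall_dist_le ?_)
  have hnear : ∀ z ∈ closedBall u (2 * r), dist (f z) (f u) ≤ H * s := fun z hz => by
    have hzu : dist z u ≤ 2 / ε * dist v u := by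
      rw [mem_closedBall] at hz
      rw [dist_comm v, div_mul_eq_mul_div, le_div_iff₀ hε]
      nlinarith
    calc dist (f z) (f u) ≤ H * dist (f v) (f u) := hH z v u hzu
      _ ≤ H * s := mul_le_mul_of_nonneg_left (by rwa [dist_comm]) hH₀
  rintro _ ⟨z, hz, rfl⟩ _ ⟨w, hw, rfl⟩
  linarith [dist_triangle_right (f z) (f w) (f u), hnear z hz, hnear w hw]

theorem NagataProp.of_isQuasisymmetric (hf : Function.Surjective f) (hqs : IsQuasisymmetric f)
    {n : ℕ} (h : NagataProp X n) : NagataProp Y n := by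
  obtain ⟨ε, hε, hcover⟩ := h.exists_variable_scale_cover
  obtain ⟨H, hH⟩ := hqs.exists_ratioBound (2 / ε) (by positivity)
  have hH₁ : 0 < max H 1 := lt_max_of_lt_right one_pos
  refine ⟨2 * max H 1, by positivity, fun s hs => ?_⟩
  have hρ : 0 < 2 * max H 1 * s := by positivity
  by_cases hsmall : ∀ y₁ y₂ : Y, dist y₁ y₂ ≤ 2 * max H 1 * s
  · refine ⟨{univ}, sUnion_singleton univ, ?_, fun E _ => ⟨{univ}, le_add_self, by simp⟩⟩
    rintro _ rfl
    exact ediam_le_of_forall_dist_le fun y₁ _ y₂ _ => hsmall y₁ y₂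
  push Not at hsmall
  obtain ⟨y₁, y₂, hy⟩ := hsmall
  set S : Set X → Prop := fun A => ediam (f '' A) ≤ ENNReal.ofReal (2 * max H 1 * s)
  have hS : Antitone S := fun A B hAB hB => (ediam_mono (image_mono hAB)).trans hB
  have hpos := hqs.exists_pos_ediam_image_closedBall_le hf hρ hy
  have hbdd := exists_not_ediam_image_closedBall_le hf hρ.le hy
  have hRpos (x : X) : 0 < maxRadius S x := maxRadius_pos hS (hpos x) (hbdd x)
  obtain ⟨𝓓, hcov, hball, hmult⟩ :=
    hcover (maxRadius S) hRpos (maxRadius_le_add_dist hS hpos hbdd)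
  refine ⟨image f '' 𝓓, by rw [← image_sUnion, hcov, image_univ_of_surjective hf], ?_, ?_⟩
  · rintro _ ⟨D, hD, rfl⟩
    obtain ⟨y, r, hr, hDy⟩ := hball D hD
    exact hS hDy (closedBall_of_lt_maxRadius hS (hpos y) hr)
  · intro E hE
    have hpull (u v : X) (huv : dist (f u) (f v) ≤ s) : dist u v ≤ ε * maxRadius S u :=
      (hH.mono (le_max_left H 1)).dist_le_of_not_ediam_image_le hε hH₁.le
        (not_closedBall_of_maxRadius_lt hS (hpos u) (hbdd u) (by linarith [hRpos u])) huv
    refine (hmult (f ⁻¹' E) fun u hu v hv => hpull u v ?_).of_map (image f) ?_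
    · exact (edist_le_ofReal hs.le).1 ((edist_le_ediam_of_mem (x := f u) hu hv).trans hE)
    · rintro _ ⟨D, hD, rfl⟩ ⟨_, ⟨z, hz, rfl⟩, hzE⟩
      exact ⟨D, hD, ⟨z, hz, hzE⟩, rfl⟩

end Transfer

theorem nagataDim_quasisymmetry_invariant_general {X Y : Type*} [MetricSpace X] [MetricSpace Y]
    (f : X → Y) (hbij : Function.Bijective f)
    (η : ℝ → ℝ) (hη0 : η 0 = 0) (hηc : ContinuousOn η (Ici 0))
    (hqs : ∀ (x x' z : X) (t : ℝ), 0 < t →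
      dist x z ≤ t * dist x' z → dist (f x) (f z) ≤ η t * dist (f x') (f z)) :
    nagataDim X = nagataDim Y := by
  obtain ⟨g, hgf, hfg⟩ := Function.bijective_iff_has_inverse.1 hbij
  have hf : IsQuasisymmetric f :=
    isQuasisymmetric_of_continuousWithinAt hη0 (hηc 0 self_mem_Ici) hqs
  have hg : IsQuasisymmetric g := hf.of_leftInverse hfg
  have hiff (n : ℕ) : NagataProp X n ↔ NagataProp Y n :=
    ⟨.of_isQuasisymmetric hbij.2 hf, .of_isQuasisymmetric hgf.surjective hg⟩
  simp only [nagataDim, hiff]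

theorem nagataDim_quasisymmetry_invariant {X Y : Type*} [MetricSpace X] [MetricSpace Y]
    (f : X → Y) (hbij : Function.Bijective f)
    (η : ℝ → ℝ) (hη0 : η 0 = 0) (hηc : ContinuousOn η (Ici 0))
    (hηm : StrictMonoOn η (Ici 0)) (hηs : η '' Ici 0 = Ici 0)
    (hqs : ∀ (x x' z : X) (t : ℝ), 0 < t →
      dist x z ≤ t * dist x' z → dist (f x) (f z) ≤ η t * dist (f x') (f z)) :
    nagataDim X = nagataDim Y :=
  nagataDim_quasisymmetry_invariant_general f hbij η hη0 hηc hqs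
end
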